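/- arXiv:2403.05657 — 9 statements merged into one kernel-verified Lean document; each statement's English description precedes it below -/
import Mathlib

section
/- Let x : ℤ → ℤ be a sequence of integers. For every integer i, the set of descendants of i in the record graph of x is exactly {j ∈ ℤ : j ≤ i and ∑_{l=k}^{i-1} x_l ≥ 0 for every k with j ≤ k < i}. In particular, every descendant of i is at most i, and an integer j ≤ i is a descendant of i if and only if all the partial sums y(k,i) = ∑_{l=k}^{i-1} x_l with j ≤ k < i are nonnegative. -/
/-!
Write `y(k,i)` for `∑_{l=k}^{i-1} x l`. By minimality of the record, every suffix sum
`y(k, R j)` with `j ≤ k < R j` is nonnegative: it is `y(j, R j) ≥ 0` minus a negative `y(j,k)`.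
Nonnegativity of all suffix sums towards `i` concatenates along the chain `j, R j, R² j, …`,
which gives one inclusion. Conversely, if `j < i` and all `y(k,i)` with `j ≤ k < i` are
nonnegative, then `y(j,i) ≥ 0`, so `j < R j ≤ i`, and the condition persists for `R j`;
the chain from `j` therefore climbs strictly until it reaches `i`.
-/

/-- The record map of an integer-valued sequence `x : ℤ → ℤ`: `recordMap x i` is the least
`n > i` such that `∑_{l=i}^{n-1} x l ≥ 0` if such an `n` exists, and `i` otherwise. -/
noncomputable def recordMap (x : ℤ → ℤ) (i : ℤ) : ℤ := by
  classical
  exact if ∃ n, i < n ∧ 0 ≤ ∑ l ∈ Finset.Ico i n, x l then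
    sInf {n : ℤ | i < n ∧ 0 ≤ ∑ l ∈ Finset.Ico i n, x l}
  else i

open Finset

theorem Finset.sum_Ico_add_sum_Ico {α M : Type*} [LinearOrder α] [LocallyFiniteOrder α]
    [AddCommMonoid M] (f : α → M) {a b c : α} (hab : a ≤ b) (hbc : b ≤ c) :
    ∑ l ∈ Ico a b, f l + ∑ l ∈ Ico b c, f l = ∑ l ∈ Ico a c, f l := by
  rw [← sum_union (Ico_disjoint_Ico_consecutive a b c), Ico_union_Ico_eq_Ico hab hbc]

namespace recordMap

variable {x : ℤ → ℤ} {i j k : ℤ}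

theorem eq_self (h : ¬ ∃ n, j < n ∧ 0 ≤ ∑ l ∈ Ico j n, x l) : recordMap x j = j := by
  simp [recordMap, h]

theorem spec (h : ∃ n, j < n ∧ 0 ≤ ∑ l ∈ Ico j n, x l) :
    (j < recordMap x j ∧ 0 ≤ ∑ l ∈ Ico j (recordMap x j), x l) ∧
      ∀ n, j < n → 0 ≤ ∑ l ∈ Ico j n, x l → recordMap x j ≤ n := by
  have hbdd : BddBelow {n : ℤ | j < n ∧ 0 ≤ ∑ l ∈ Ico j n, x l} := ⟨j, fun _ hn => hn.1.le⟩
  simp only [recordMap, h, if_true]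
  exact ⟨Int.csInf_mem h hbdd, fun n hjn hn => csInf_le hbdd ⟨hjn, hn⟩⟩

theorem self_le : j ≤ recordMap x j := by
  by_cases h : ∃ n, j < n ∧ 0 ≤ ∑ l ∈ Ico j n, x l
  · exact (spec h).1.1.le
  · exact (eq_self h).ge

theorem sum_Ico_nonneg (hjk : j ≤ k) (hk : k < recordMap x j) :
    0 ≤ ∑ l ∈ Ico k (recordMap x j), x l := by
  by_cases h : ∃ n, j < n ∧ 0 ≤ ∑ l ∈ Ico j n, x l
  · obtain ⟨⟨-, hrec⟩, hmin⟩ := spec h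
    obtain rfl | hjk := hjk.eq_or_lt
    · exact hrec
    have hprefix : ∑ l ∈ Ico j k, x l < 0 := by
      by_contra! hnonneg
      exact hk.not_ge (hmin k hjk hnonneg)
    rw [← sum_Ico_add_sum_Ico x hjk.le hk.le] at hrec
    linarith
  · exact absurd (eq_self h ▸ hk) hjk.not_gt

end recordMap

def SuffixSumsNonneg (x : ℤ → ℤ) (j i : ℤ) : Prop :=
  ∀ k, j ≤ k → k < i → 0 ≤ ∑ l ∈ Ico k i, x l

namespace SuffixSumsNonneg

variable {x : ℤ → ℤ} {i j m : ℤ}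

theorem mono (h : SuffixSumsNonneg x j i) (hjm : j ≤ m) : SuffixSumsNonneg x m i :=
  fun k hmk hki => h k (hjm.trans hmk) hki

theorem trans (hjm : SuffixSumsNonneg x j m) (hmi : SuffixSumsNonneg x m i) (hle : m ≤ i) :
    SuffixSumsNonneg x j i := by
  intro k hjk hki
  obtain hmk | hkm := le_or_gt m k
  · exact hmi k hmk hki
  have htail : 0 ≤ ∑ l ∈ Ico m i, x l := by
    obtain rfl | hlt := hle.eq_or_lt
    · simp
    · exact hmi m le_rfl hlt
  rw [← sum_Ico_add_sum_Ico x hkm.le hle]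
  linarith [hjm k hjk hkm]

theorem recordMap_self : SuffixSumsNonneg x j (recordMap x j) :=
  fun _ => recordMap.sum_Ico_nonneg

theorem lt_recordMap_and_recordMap_le (h : SuffixSumsNonneg x j i) (hji : j < i) :
    j < recordMap x j ∧ recordMap x j ≤ i := by
  have hex : ∃ n, j < n ∧ 0 ≤ ∑ l ∈ Ico j n, x l := ⟨i, hji, h j le_rfl hji⟩
  obtain ⟨⟨hlt, -⟩, hmin⟩ := recordMap.spec hex
  exact ⟨hlt, hmin i hji (h j le_rfl hji)⟩

end SuffixSumsNonneg

open SuffixSumsNonneg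

theorem le_and_suffixSumsNonneg_of_iterate_recordMap {x : ℤ → ℤ} {i : ℤ} (n : ℕ) {j : ℤ}
    (h : (recordMap x)^[n] j = i) : j ≤ i ∧ SuffixSumsNonneg x j i := by
  induction n generalizing j with
  | zero => exact ⟨h.le, fun k hjk hki => absurd (h ▸ hjk) hki.not_ge⟩
  | succ n ih =>
    obtain ⟨hle, hsuffix⟩ := ih h
    exact ⟨recordMap.self_le.trans hle, recordMap_self.trans hsuffix hle⟩

theorem exists_iterate_recordMap_eq {x : ℤ → ℤ} {i j : ℤ} (hji : j ≤ i)
    (h : SuffixSumsNonneg x j i) : ∃ n : ℕ, (recordMap x)^[n] j = i := by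
  obtain rfl | hlt := hji.eq_or_lt
  · exact ⟨0, rfl⟩
  obtain ⟨hjr, hri⟩ := h.lt_recordMap_and_recordMap_le hlt
  obtain ⟨n, hn⟩ := exists_iterate_recordMap_eq hri (h.mono hjr.le)
  exact ⟨n + 1, hn⟩
termination_by (i - j).toNat
decreasing_by omega

/-- The set of descendants of `i` in the record graph of `x` (those `j` with `j = i` or
`R_x^n (j) = i` for some `n ≥ 1`) is exactly the set of `j ≤ i` such that all the partial sums
`y(k,i) = ∑_{l=k}^{i-1} x l` with `j ≤ k < i` are nonnegative. -/
theorem descendants_eq_interval (x : ℤ → ℤ) (i : ℤ) :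
    {j : ℤ | ∃ n : ℕ, (recordMap x)^[n] j = i} =
      {j : ℤ | j ≤ i ∧ ∀ k : ℤ, j ≤ k → k < i → 0 ≤ ∑ l ∈ Finset.Ico k i, x l} := by
  ext j
  constructor
  · rintro ⟨n, hn⟩
    exact le_and_suffixSumsNonneg_of_iterate_recordMap n hn
  · rintro ⟨hji, h⟩
    exact exists_iterate_recordMap_eq hji h
end

section
/- Let x : ℤ → ℝ be a real-valued sequence and let i ≠ j be two integers lying in the same connected component of the record graph of x (i.e., R_x^m(i) = R_x^n(j) for some m, n ≥ 0). Define the Royal Line of Succession (depth-first search) order ≺ by: i ≺ j if and only if either R_x^m(i) = j for some m ≥ 1, or, letting m, n ≥ 1 be the smallest positive integers with R_x^m(i) = R_x^n(j), one has R_x^{m-1}(i) < R_x^{n-1}(j). Then i < j (as integers) if and only if i ≺ j. -/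
/-- The record map of a real-valued sequence `x : ℤ → ℝ`: `recordMapR x i` is the least
`n > i` such that `∑_{l=i}^{n-1} x l ≥ 0` if such an `n` exists, and `i` otherwise. -/
noncomputable def recordMapR (x : ℤ → ℝ) (i : ℤ) : ℤ := by
  classical
  exact if ∃ n, i < n ∧ 0 ≤ ∑ l ∈ Finset.Ico i n, x l then
    sInf {n : ℤ | i < n ∧ 0 ≤ ∑ l ∈ Finset.Ico i n, x l}
  else i

/-- The Royal Line of Succession (depth-first search) order: `rlsLT x i j` holds iff either
`j = R_x^m(i)` for some `m ≥ 1`, or, letting `m, n ≥ 1` be the smallest positive integers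
with `R_x^m(i) = R_x^n(j)`, one has `R_x^{m-1}(i) < R_x^{n-1}(j)` (children of a common
vertex being ordered by the integer order). -/
def rlsLT (x : ℤ → ℝ) (i j : ℤ) : Prop :=
  (∃ m : ℕ, 1 ≤ m ∧ (recordMapR x)^[m] i = j) ∨
    ∃ m n : ℕ, 1 ≤ m ∧ 1 ≤ n ∧ (recordMapR x)^[m] i = (recordMapR x)^[n] j ∧
      (∀ m' n' : ℕ, 1 ≤ m' → 1 ≤ n' →
        (recordMapR x)^[m'] i = (recordMapR x)^[n'] j → m ≤ m' ∧ n ≤ n') ∧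
      (recordMapR x)^[m - 1] i < (recordMapR x)^[n - 1] j

section Aux

variable (x : ℤ → ℝ)

lemma recordMapR_spec (i : ℤ) (h : ∃ n, i < n ∧ 0 ≤ ∑ l ∈ Finset.Ico i n, x l) :
    (i < recordMapR x i ∧ 0 ≤ ∑ l ∈ Finset.Ico i (recordMapR x i), x l) ∧
    ∀ n, i < n → 0 ≤ ∑ l ∈ Finset.Ico i n, x l → recordMapR x i ≤ n := by
  have hbdd : BddBelow {n : ℤ | i < n ∧ 0 ≤ ∑ l ∈ Finset.Ico i n, x l} :=
    ⟨i, fun n hn => le_of_lt hn.1⟩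
  have hne : {n : ℤ | i < n ∧ 0 ≤ ∑ l ∈ Finset.Ico i n, x l}.Nonempty := by
    obtain ⟨n, hn1, hn2⟩ := h; exact ⟨n, hn1, hn2⟩
  have hR : recordMapR x i = sInf {n : ℤ | i < n ∧ 0 ≤ ∑ l ∈ Finset.Ico i n, x l} := by
    unfold recordMapR
    rw [if_pos h]
  refine ⟨?_, ?_⟩
  · have := Int.csInf_mem hne hbdd
    rw [← hR] at this
    exact this
  · intro n hn1 hn2
    rw [hR]
    exact csInf_le hbdd ⟨hn1, hn2⟩

lemma le_recordMapR (i : ℤ) : i ≤ recordMapR x i := by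
  by_cases h : ∃ n, i < n ∧ 0 ≤ ∑ l ∈ Finset.Ico i n, x l
  · exact ((recordMapR_spec x i h).1.1).le
  · unfold recordMapR; rw [if_neg h]

lemma recordMapR_le_of_mem (i n : ℤ) (h1 : i < n) (h2 : 0 ≤ ∑ l ∈ Finset.Ico i n, x l) :
    recordMapR x i ≤ n :=
  (recordMapR_spec x i ⟨n, h1, h2⟩).2 n h1 h2

lemma sum_neg_of_lt_recordMapR (i n : ℤ) (h1 : i < n) (h2 : n < recordMapR x i) :
    ∑ l ∈ Finset.Ico i n, x l < 0 := by
  by_contra h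
  push_neg at h
  have := recordMapR_le_of_mem x i n h1 h
  omega

lemma sum_nonneg_recordMapR (i : ℤ) (h : i < recordMapR x i) :
    0 ≤ ∑ l ∈ Finset.Ico i (recordMapR x i), x l := by
  by_cases hex : ∃ n, i < n ∧ 0 ≤ ∑ l ∈ Finset.Ico i n, x l
  · exact (recordMapR_spec x i hex).1.2
  · exfalso
    unfold recordMapR at h
    rw [if_neg hex] at h
    omega

/-- If `i < j < R i`, then `j < R j ≤ R i`. -/
lemma squeeze (i j : ℤ) (h1 : i < j) (h2 : j < recordMapR x i) :
    j < recordMapR x j ∧ recordMapR x j ≤ recordMapR x i := by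
  have hiR : i < recordMapR x i := h1.trans h2
  have hs1 : ∑ l ∈ Finset.Ico i j, x l < 0 := sum_neg_of_lt_recordMapR x i j h1 h2
  have hs2 : 0 ≤ ∑ l ∈ Finset.Ico i (recordMapR x i), x l := sum_nonneg_recordMapR x i hiR
  have hsplit : ∑ l ∈ Finset.Ico i j, x l + ∑ l ∈ Finset.Ico j (recordMapR x i), x l
      = ∑ l ∈ Finset.Ico i (recordMapR x i), x l := by
    rw [← Finset.sum_union (Finset.Ico_disjoint_Ico_consecutive i j (recordMapR x i)),
      Finset.Ico_union_Ico_eq_Ico h1.le h2.le]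
  have hpos : 0 ≤ ∑ l ∈ Finset.Ico j (recordMapR x i), x l := by linarith
  have hex : ∃ n, j < n ∧ 0 ≤ ∑ l ∈ Finset.Ico j n, x l := ⟨_, h2, hpos⟩
  exact ⟨(recordMapR_spec x j hex).1.1, (recordMapR_spec x j hex).2 _ h2 hpos⟩

lemma le_iterate_recordMapR (d : ℕ) (j : ℤ) : j ≤ (recordMapR x)^[d] j := by
  induction d with
  | zero => simp
  | succ d ih =>
    rw [Function.iterate_succ_apply']
    exact ih.trans (le_recordMapR x _)

lemma iterate_recordMapR_mono (j : ℤ) {k k' : ℕ} (h : k ≤ k') :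
    (recordMapR x)^[k] j ≤ (recordMapR x)^[k'] j := by
  obtain ⟨d, rfl⟩ := Nat.exists_eq_add_of_le h
  rw [Nat.add_comm, Function.iterate_add_apply]
  exact le_iterate_recordMapR x d _

/-- If `i < j < R i`, then some positive iterate of `j` equals `R i`. -/
lemma reach_up (i : ℤ) : ∀ d : ℕ, ∀ j : ℤ, i < j → j < recordMapR x i →
    (recordMapR x i - j).toNat ≤ d →
    ∃ t : ℕ, 1 ≤ t ∧ (recordMapR x)^[t] j = recordMapR x i := by
  intro d
  induction d with
  | zero =>
    intro j h1 h2 h3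
    exfalso; omega
  | succ d ih =>
    intro j h1 h2 h3
    obtain ⟨hjR, hRle⟩ := squeeze x i j h1 h2
    rcases eq_or_lt_of_le hRle with heq | hlt
    · exact ⟨1, le_refl 1, by simpa using heq⟩
    · obtain ⟨t, ht1, ht2⟩ := ih (recordMapR x j) (h1.trans hjR) hlt (by omega)
      exact ⟨t + 1, by omega, by rw [Function.iterate_succ_apply]; exact ht2⟩

lemma rlsLT_of_lt (i j : ℤ) (h : i < j)
    (hcomp : ∃ m n : ℕ, (recordMapR x)^[m] i = (recordMapR x)^[n] j) :
    rlsLT x i j := by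
  classical
  obtain ⟨m, n, hmn⟩ := hcomp
  have hmj : j ≤ (recordMapR x)^[m] i := hmn ▸ le_iterate_recordMapR x n j
  have hP : ∃ N, j ≤ (recordMapR x)^[N] i := ⟨m, hmj⟩
  set N := Nat.find hP with hNdef
  have hN : j ≤ (recordMapR x)^[N] i := Nat.find_spec hP
  have hN1 : 1 ≤ N := by
    by_contra h0
    have h0' : N = 0 := by omega
    rw [h0'] at hN
    simp at hN
    omega
  have hNpred : (recordMapR x)^[N - 1] i < j := by
    have := Nat.find_min hP (show N - 1 < N by omega)
    push_neg at this
    exact this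
  have hRa : (recordMapR x)^[N] i = recordMapR x ((recordMapR x)^[N - 1] i) := by
    have hNe : N = (N - 1) + 1 := by omega
    rw [hNe, Function.iterate_succ_apply', Nat.add_sub_cancel]
  rcases eq_or_lt_of_le hN with heq | hlt
  · exact Or.inl ⟨N, hN1, heq.symm⟩
  · have hreach : ∃ t, (recordMapR x)^[t] j = (recordMapR x)^[N] i := by
      rw [hRa]
      obtain ⟨t, _, ht⟩ := reach_up x ((recordMapR x)^[N - 1] i)
        ((recordMapR x ((recordMapR x)^[N - 1] i) - j).toNat) j hNpred (hRa ▸ hlt) le_rfl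
      exact ⟨t, ht⟩
    set t := Nat.find hreach with htdef
    have htspec : (recordMapR x)^[t] j = (recordMapR x)^[N] i := Nat.find_spec hreach
    have ht1 : 1 ≤ t := by
      by_contra h0
      have h0' : t = 0 := by omega
      rw [h0'] at htspec
      simp at htspec
      omega
    refine Or.inr ⟨N, t, hN1, ht1, htspec.symm, ?_, ?_⟩
    · intro m' n' hm' hn' he
      have hNm' : N ≤ m' := by
        refine Nat.find_min' hP ?_
        rw [he]
        exact le_iterate_recordMapR x n' j
      refine ⟨hNm', ?_⟩
      by_contra hc
      push_neg at hc
      refine Nat.find_min hreach hc ?_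
      have hle1 : (recordMapR x)^[N] i ≤ (recordMapR x)^[m'] i :=
        iterate_recordMapR_mono x i hNm'
      have hle2 : (recordMapR x)^[n'] j ≤ (recordMapR x)^[t] j :=
        iterate_recordMapR_mono x j hc.le
      rw [htspec] at hle2
      rw [he] at hle1
      omega
    · exact lt_of_lt_of_le (lt_of_lt_of_le hNpred (le_iterate_recordMapR x (t - 1) j)) le_rfl

/-- Orbit/minimal-pair incompatibility: if `b` lies on the forward orbit of `a`,
then the "right disjunct" data for the pair `(b, a)` is contradictory. -/
lemma rls_helper (a b : ℤ) (p : ℕ) (hp : 1 ≤ p) (hab : (recordMapR x)^[p] a = b)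
    (m n : ℕ) (hm : 1 ≤ m) (hn : 1 ≤ n)
    (heq : (recordMapR x)^[m] b = (recordMapR x)^[n] a)
    (hmin : ∀ m' n' : ℕ, 1 ≤ m' → 1 ≤ n' →
      (recordMapR x)^[m'] b = (recordMapR x)^[n'] a → m ≤ m' ∧ n ≤ n')
    (hlt : (recordMapR x)^[m - 1] b < (recordMapR x)^[n - 1] a) : False := by
  have h1 : (recordMapR x)^[1] b = (recordMapR x)^[1 + p] a := by
    rw [← hab, ← Function.iterate_add_apply]
  obtain ⟨hm1, hnp⟩ := hmin 1 (1 + p) le_rfl (by omega) h1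
  have hmeq : m = 1 := le_antisymm hm1 hm
  have hlt' : b < (recordMapR x)^[n - 1] a := by
    have : m - 1 = 0 := by omega
    rwa [this, Function.iterate_zero_apply] at hlt
  rcases eq_or_lt_of_le hnp with he | hl
  · have : (recordMapR x)^[n - 1] a = b := by
      rw [← hab]; congr 1; omega
    omega
  · have : (recordMapR x)^[n - 1] a ≤ (recordMapR x)^[p] a :=
      iterate_recordMapR_mono x a (by omega)
    rw [hab] at this
    omega

lemma rlsLT_asymm (i j : ℤ) (hij : i ≠ j) (h1 : rlsLT x i j) (h2 : rlsLT x j i) : False := by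
  rcases h1 with ⟨m, hm, hmj⟩ | ⟨m, n, hm, hn, heq, hmin, hlt⟩
  · rcases h2 with ⟨p, hp, hpi⟩ | ⟨m', n', hm', hn', heq', hmin', hlt'⟩
    · -- both left
      have hfix : (recordMapR x)^[p + m] i = i := by
        rw [Function.iterate_add_apply, hmj, hpi]
      have h3 : (recordMapR x)^[m] i ≤ (recordMapR x)^[p + m] i :=
        iterate_recordMapR_mono x i (by omega)
      have h4 : i ≤ (recordMapR x)^[m] i := le_iterate_recordMapR x m i
      rw [hfix, hmj] at h3
      rw [hmj] at h4
      omega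
    · -- i → j left, j → i right
      exact rls_helper x i j m hm hmj m' n' hm' hn' heq' hmin' hlt'
  · rcases h2 with ⟨p, hp, hpi⟩ | ⟨m', n', hm', hn', heq', hmin', hlt'⟩
    · -- i → j right, j → i left
      exact rls_helper x j i p hp hpi m n hm hn heq hmin hlt
    · -- both right
      obtain ⟨h5, h6⟩ := hmin n' m' hn' hm' heq'.symm
      obtain ⟨h7, h8⟩ := hmin' n m hn hm heq.symm
      have hm'' : m = n' := le_antisymm h5 h8
      have hn'' : n = m' := le_antisymm h6 h7
      rw [← hm'', ← hn''] at hlt'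
      omega

end Aux

/-- For two distinct integers `i ≠ j` lying in the same connected component of the record
graph of a real-valued sequence `x`, the integer order and the Royal Line of Succession
(depth-first search) order coincide: `i < j ↔ i ≺ j`. -/
theorem lt_iff_rlsLT (x : ℤ → ℝ) (i j : ℤ) (hij : i ≠ j)
    (hcomp : ∃ m n : ℕ, (recordMapR x)^[m] i = (recordMapR x)^[n] j) :
    i < j ↔ rlsLT x i j := by
  constructor
  · intro h
    exact rlsLT_of_lt x i j h hcomp
  · intro h
    by_contra hle
    push_neg at hle
    have hji : j < i := hle.lt_of_ne (Ne.symm hij)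
    have hcomp' : ∃ m n : ℕ, (recordMapR x)^[m] j = (recordMapR x)^[n] i := by
      obtain ⟨m, n, hmn⟩ := hcomp
      exact ⟨n, m, hmn.symm⟩
    exact rlsLT_asymm x i j hij h (rlsLT_of_lt x j i hji hcomp')
end

section
/- Let x : ℤ → ℤ be a sequence of integers with x_k ≥ -1 for every k ∈ ℤ. Let i be an integer such that y(m,i) < 0 for some m < i (equivalently, L_x(i) > -∞, i.e., i has only finitely many descendants). Then the number of children of i in the record graph of x is exactly x_{i-1} + 1. -/
open Finset

def leftRecords (f : ℤ → ℤ) (i : ℤ) : Set ℤ :=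
  {j | j < i ∧ ∀ n, j < n → n < i → f j < f n}

section leftRecords

variable {f : ℤ → ℤ} {i : ℤ}

lemma injOn_leftRecords : Set.InjOn f (leftRecords f i) := by
  intro a ha b hb hab
  by_contra hne
  rcases lt_or_gt_of_ne hne with hlt | hlt
  · exact (ha.2 b hlt hb.1).ne hab
  · exact (hb.2 a hlt ha.1).ne' hab

lemma le_of_mem_leftRecords {j : ℤ} (hj : j ∈ leftRecords f i) : f j ≤ f (i - 1) := by
  rcases (show j ≤ i - 1 by linarith [hj.1]).eq_or_lt with rfl | hlt
  · rfl
  · exact (hj.2 _ hlt (by linarith)).le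

lemma exists_mem_leftRecords_eq (hstep : ∀ k < i, f (k + 1) ≤ f k + 1) {m c : ℤ} (hm : m < i)
    (hfm : f m ≤ c) (hc : c ≤ f (i - 1)) : ∃ j ∈ leftRecords f i, f j = c := by
  obtain ⟨j, ⟨hji, hjc⟩, hlast⟩ := Int.exists_greatest_of_bdd (P := fun n => n < i ∧ f n ≤ c)
    ⟨i, fun n hn => hn.1.le⟩ ⟨m, hm, hfm⟩
  have hafter : ∀ n, j < n → n < i → c < f n := fun n hjn hni =>
    not_le.1 fun hnc => (hlast n ⟨hni, hnc⟩).not_gt hjn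
  have hcj : c ≤ f j := by
    rcases (show j + 1 ≤ i by linarith).eq_or_lt with hi | hlt
    · rwa [show j = i - 1 by linarith]
    · linarith [hafter (j + 1) (by linarith) hlt, hstep j hji]
  have hfj : f j = c := le_antisymm hjc hcj
  exact ⟨j, ⟨hji, fun n hjn hni => hfj ▸ hafter n hjn hni⟩, hfj⟩

lemma image_nonneg_leftRecords (hstep : ∀ k < i, f (k + 1) ≤ f k + 1) {m : ℤ} (hm : m < i)
    (hfm : f m < 0) : f '' {j ∈ leftRecords f i | 0 ≤ f j} = Set.Icc 0 (f (i - 1)) := by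
  ext c
  constructor
  · rintro ⟨j, ⟨hj, hfj⟩, rfl⟩
    exact ⟨hfj, le_of_mem_leftRecords hj⟩
  · rintro ⟨hc0, hc⟩
    obtain ⟨j, hj, rfl⟩ := exists_mem_leftRecords_eq hstep hm (by linarith) hc
    exact ⟨j, ⟨hj, hc0⟩, rfl⟩

theorem ncard_nonneg_leftRecords (hstep : ∀ k < i, f (k + 1) ≤ f k + 1) {m : ℤ} (hm : m < i)
    (hfm : f m < 0) :
    {j ∈ leftRecords f i | 0 ≤ f j}.Finite ∧
      {j ∈ leftRecords f i | 0 ≤ f j}.ncard = (f (i - 1) + 1).toNat := by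
  have hinj : Set.InjOn f {j ∈ leftRecords f i | 0 ≤ f j} :=
    injOn_leftRecords.mono fun _ hj => hj.1
  have himage := image_nonneg_leftRecords hstep hm hfm
  refine ⟨Set.Finite.of_finite_image (himage ▸ Set.finite_Icc _ _) hinj, ?_⟩
  rw [← hinj.ncard_image, himage, ← coe_Icc, Set.ncard_coe_finset,
    Int.card_Icc, sub_zero]

end leftRecords

/-- `partialSum x j i` is the paper's `y(j, i) = ∑_{l=j}^{i-1} x l`. -/
noncomputable def partialSum (x : ℤ → ℤ) (j i : ℤ) : ℤ := ∑ l ∈ Ico j i, x l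

section partialSum

variable (x : ℤ → ℤ)

lemma partialSum_add {j n i : ℤ} (hjn : j ≤ n) (hni : n ≤ i) :
    partialSum x j n + partialSum x n i = partialSum x j i := by
  rw [partialSum, partialSum, partialSum, ← sum_union (Ico_disjoint_Ico_consecutive j n i),
    Ico_union_Ico_eq_Ico hjn hni]

lemma partialSum_add_one (k : ℤ) : partialSum x k (k + 1) = x k := by
  rw [partialSum, ← insert_Ico_add_one_left_eq_Ico (lt_add_one k), Ico_self, insert_empty,
    sum_singleton]

lemma partialSum_eq_add {k i : ℤ} (hki : k < i) :
    partialSum x k i = x k + partialSum x (k + 1) i := by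
  rw [← partialSum_add x (by linarith : k ≤ k + 1) hki, partialSum_add_one]

lemma partialSum_sub_one (i : ℤ) : partialSum x (i - 1) i = x (i - 1) := by
  simpa using partialSum_add_one x (i - 1)

end partialSum

lemma recordMap_eq_iff_isLeast (x : ℤ → ℤ) {j n : ℤ} (hjn : j ≠ n) :
    recordMap x j = n ↔ IsLeast {m | j < m ∧ 0 ≤ partialSum x j m} n := by
  have hbdd : BddBelow {m | j < m ∧ 0 ≤ partialSum x j m} := ⟨j, fun m hm => hm.1.le⟩
  unfold recordMap
  split_ifs with hex
  · exact ⟨fun h => h ▸ ⟨Int.csInf_mem hex hbdd, fun m hm => csInf_le hbdd hm⟩,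
      IsLeast.csInf_eq⟩
  · exact ⟨fun h => absurd h hjn, fun h => absurd ⟨n, h.1⟩ hex⟩

lemma recordMap_eq_iff_mem_leftRecords (x : ℤ → ℤ) {j i : ℤ} (hji : j ≠ i) :
    recordMap x j = i ↔
      j ∈ leftRecords (partialSum x · i) i ∧ 0 ≤ partialSum x j i := by
  rw [recordMap_eq_iff_isLeast x hji]
  constructor
  · rintro ⟨⟨hlt, hnonneg⟩, hleast⟩
    refine ⟨⟨hlt, fun n hjn hni => ?_⟩, hnonneg⟩
    by_contra! hle
    have hsplit := partialSum_add x hjn.le hni.le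
    exact (hleast ⟨hjn, by linarith⟩).not_gt hni
  · rintro ⟨⟨hlt, hrec⟩, hnonneg⟩
    refine ⟨⟨hlt, hnonneg⟩, fun n ⟨hjn, hn⟩ => not_lt.1 fun hni => ?_⟩
    have hsplit := partialSum_add x hjn.le hni.le
    linarith [hrec n hjn hni]

/-- For a skip-free to the left sequence (`x k ≥ -1` for all `k`), if some partial sum
`y(m,i) = ∑_{l=m}^{i-1} x l` with `m < i` is negative (equivalently `L_x(i) > -∞`, i.e. `i`
has finitely many descendants), then the set of children of `i` in the record graph of `x`
is finite, of cardinality exactly `x (i-1) + 1`. -/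
theorem card_children_eq (x : ℤ → ℤ) (hx : ∀ k : ℤ, -1 ≤ x k) (i : ℤ)
    (h : ∃ m < i, ∑ l ∈ Finset.Ico m i, x l < 0) :
    {j : ℤ | j ≠ i ∧ recordMap x j = i}.Finite ∧
      ({j : ℤ | j ≠ i ∧ recordMap x j = i}.ncard : ℤ) = x (i - 1) + 1 := by
  obtain ⟨m, hm, hneg⟩ := h
  have hchildren : {j : ℤ | j ≠ i ∧ recordMap x j = i} =
      {j ∈ leftRecords (partialSum x · i) i | 0 ≤ partialSum x j i} := by
    ext j
    exact ⟨fun ⟨hji, hj⟩ => (recordMap_eq_iff_mem_leftRecords x hji).1 hj,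
      fun hj => ⟨hj.1.1.ne, (recordMap_eq_iff_mem_leftRecords x hj.1.1.ne).2 hj⟩⟩
  have hstep : ∀ k < i, partialSum x (k + 1) i ≤ partialSum x k i + 1 := fun k hk => by
    linarith [partialSum_eq_add x hk, hx k]
  obtain ⟨hfin, hcard⟩ := ncard_nonneg_leftRecords hstep hm hneg
  rw [partialSum_sub_one] at hcard
  rw [hchildren]
  exact ⟨hfin, by rw [hcard, Int.toNat_of_nonneg (by linarith [hx (i - 1)])]⟩
end

section
/- Let x : ℤ → ℤ be a sequence of integers with x_k ≥ -1 for every k ∈ ℤ. For every integer i, the number of children of i in the record graph of x is finite and equals x_{i-1} + 1 - max(t_x(i), 0); that is, it equals x_{i-1} + 1 when t_x(i) = -1, and equals x_{i-1} + 1 - t_x(i) when t_x(i) ≥ 0. -/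
/-- The type of `i` for the sequence `x`: `t_x(i) = min { max (y(m,i), -1) : m < i }`,
where `y(m,i) = ∑_{l=m}^{i-1} x l`. -/
noncomputable def typeOf (x : ℤ → ℤ) (i : ℤ) : ℤ :=
  sInf {v : ℤ | ∃ m < i, v = max (∑ l ∈ Finset.Ico m i, x l) (-1)}

/-!
Write `s j = y(j, i)`. A child of `i` is exactly a `j < i` with `0 ≤ s j < s n` for all
`j < n < i`: a nonnegative strict minimum of `s` on `[j, i)`. Distinct such `j` have distinct
values `s j`, all in `[max (t_x(i)) 0, x (i-1)]`, since `t_x(i)` is the least value of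
`max (s m) (-1)` and `s (i-1) = x (i-1)`. Conversely, `s m ≥ s (m+1) - 1`, so as `m` decreases
`s` cannot jump past a value `v` of that interval: `v` is attained at the last `j < i` with
`s j ≤ v`, which is then a child.
-/

open Set

/-- `increment x m n` is the paper's `y(m, n)`. -/
noncomputable def increment (x : ℤ → ℤ) (m n : ℤ) : ℤ := ∑ l ∈ Finset.Ico m n, x l

def children (x : ℤ → ℤ) (i : ℤ) : Set ℤ := {j | j ≠ i ∧ recordMap x j = i}

section

variable {x : ℤ → ℤ} {i j m n : ℤ}

theorem increment_add_increment (hmn : m ≤ n) (hni : n ≤ i) :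
    increment x m n + increment x n i = increment x m i := by
  rw [increment, increment, increment,
    ← Finset.sum_union (Finset.Ico_disjoint_Ico_consecutive m n i),
    Finset.Ico_union_Ico_eq_Ico hmn hni]

theorem increment_eq_add_increment_add_one (hmi : m < i) :
    increment x m i = x m + increment x (m + 1) i := by
  rw [increment, increment, Finset.Ico_add_one_left_eq_Ioo, Finset.add_sum_Ioo_eq_sum_Ico hmi]

theorem increment_sub_one (x : ℤ → ℤ) (i : ℤ) : increment x (i - 1) i = x (i - 1) := by
  rw [increment_eq_add_increment_add_one (sub_one_lt i), sub_add_cancel, increment,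
    Finset.Ico_self, Finset.sum_empty, add_zero]

theorem isLeast_recordMap (h : ∃ n, j < n ∧ 0 ≤ increment x j n) :
    IsLeast {n | j < n ∧ 0 ≤ increment x j n} (recordMap x j) := by
  have hbdd : BddBelow {n | j < n ∧ 0 ≤ increment x j n} := ⟨j, fun _ hn => hn.1.le⟩
  rw [show recordMap x j = sInf {n | j < n ∧ 0 ≤ increment x j n} from if_pos h]
  exact ⟨Int.csInf_mem h hbdd, fun _ hn => csInf_le hbdd hn⟩

theorem recordMap_of_not_exists (h : ¬∃ n, j < n ∧ 0 ≤ increment x j n) : recordMap x j = j :=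
  if_neg h

theorem mem_children_iff_isLeast :
    j ∈ children x i ↔ j < i ∧ IsLeast {n | j < n ∧ 0 ≤ increment x j n} i := by
  by_cases h : ∃ n, j < n ∧ 0 ≤ increment x j n
  · have hleast := isLeast_recordMap h
    refine ⟨fun ⟨_, hji⟩ => ⟨hji ▸ hleast.1.1, hji ▸ hleast⟩, fun ⟨hji, hi⟩ => ⟨hji.ne, ?_⟩⟩
    exact hleast.unique hi
  · rw [children, mem_ofPred_eq, recordMap_of_not_exists h]
    exact ⟨fun ⟨hne, heq⟩ => absurd heq hne, fun ⟨_, hi⟩ => absurd ⟨i, hi.1⟩ h⟩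

theorem mem_children_iff : j ∈ children x i ↔
    j < i ∧ 0 ≤ increment x j i ∧ ∀ n ∈ Ioo j i, increment x j i < increment x n i := by
  rw [mem_children_iff_isLeast]
  refine and_congr_right fun hji => ?_
  have hsplit : ∀ n, j ≤ n → n ≤ i → increment x j n = increment x j i - increment x n i :=
    fun n hjn hni => eq_sub_of_add_eq (increment_add_increment hjn hni)
  constructor
  · rintro ⟨⟨-, hi⟩, hleast⟩
    refine ⟨hi, fun n ⟨hjn, hni⟩ => ?_⟩
    by_contra! hle
    have := hleast ⟨hjn, by rw [hsplit n hjn.le hni.le]; omega⟩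
    omega
  · rintro ⟨hi, hrec⟩
    refine ⟨⟨hji, hi⟩, fun n ⟨hjn, hn⟩ => ?_⟩
    by_contra! hni
    have := hrec n ⟨hjn, hni⟩
    rw [hsplit n hjn.le hni.le] at hn
    omega

theorem injOn_increment_children : InjOn (increment x · i) (children x i) := by
  intro j hj j' hj' heq
  rw [mem_children_iff] at hj hj'
  by_contra hne
  rcases lt_or_gt_of_ne hne with h | h
  · exact (hj.2.2 j' ⟨h, hj'.1⟩).ne heq
  · exact (hj'.2.2 j ⟨h, hj.1⟩).ne heq.symm

theorem bddBelow_typeOf_set (x : ℤ → ℤ) (i : ℤ) :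
    BddBelow {v : ℤ | ∃ m < i, v = max (∑ l ∈ Finset.Ico m i, x l) (-1)} :=
  ⟨-1, by rintro v ⟨m, -, rfl⟩; exact le_max_right _ _⟩

theorem typeOf_le (hmi : m < i) : typeOf x i ≤ max (increment x m i) (-1) :=
  csInf_le (bddBelow_typeOf_set x i) ⟨m, hmi, rfl⟩

theorem exists_typeOf_eq (x : ℤ → ℤ) (i : ℤ) :
    ∃ m < i, typeOf x i = max (increment x m i) (-1) :=
  Int.csInf_mem (s := {v : ℤ | ∃ m < i, v = max (∑ l ∈ Finset.Ico m i, x l) (-1)})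
    ⟨_, i - 1, sub_one_lt i, rfl⟩ (bddBelow_typeOf_set x i)

theorem increment_mem_Icc_of_mem_children (hj : j ∈ children x i) :
    increment x j i ∈ Icc (max (typeOf x i) 0) (x (i - 1)) := by
  rw [mem_children_iff] at hj
  obtain ⟨hji, hnonneg, hrec⟩ := hj
  have htype := typeOf_le (x := x) hji
  refine ⟨by omega, ?_⟩
  rw [← increment_sub_one x i]
  rcases (Int.le_sub_one_of_lt hji).eq_or_lt with rfl | hlt
  · rfl
  · exact (hrec (i - 1) ⟨hlt, sub_one_lt i⟩).le

theorem exists_increment_eq_of_le (hx : ∀ k, -1 ≤ x k) {v : ℤ} (hmi : m < i)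
    (hmv : increment x m i ≤ v) (hv : v ≤ x (i - 1)) :
    ∃ j < i, increment x j i = v ∧ ∀ n ∈ Ioo j i, v < increment x n i := by
  obtain ⟨j, ⟨hji, hjv⟩, hlast⟩ := Int.exists_greatest_of_bdd
    (P := fun n => n < i ∧ increment x n i ≤ v) ⟨i, fun n hn => hn.1.le⟩ ⟨m, hmi, hmv⟩
  have hrec : ∀ n ∈ Ioo j i, v < increment x n i := fun n ⟨hjn, hni⟩ => by
    by_contra! hnv
    exact (hlast n ⟨hni, hnv⟩).not_gt hjn
  refine ⟨j, hji, le_antisymm hjv ?_, hrec⟩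
  rcases (Int.le_sub_one_of_lt hji).eq_or_lt with rfl | hlt
  · rwa [increment_sub_one]
  · have hnext := hrec (j + 1) ⟨lt_add_one j, by omega⟩
    have hstep := hx j
    rw [increment_eq_add_increment_add_one hji]
    omega

theorem exists_mem_children_increment_eq (hx : ∀ k, -1 ≤ x k) {v : ℤ}
    (hv : v ∈ Icc (max (typeOf x i) 0) (x (i - 1))) :
    ∃ j ∈ children x i, increment x j i = v := by
  obtain ⟨hlo, hhi⟩ := hv
  obtain ⟨m, hmi, hm⟩ := exists_typeOf_eq x i
  obtain ⟨j, hji, hjv, hrec⟩ := exists_increment_eq_of_le hx hmi (by omega) hhi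
  exact ⟨j, mem_children_iff.2 ⟨hji, by omega, fun n hn => hjv ▸ hrec n hn⟩, hjv⟩

theorem image_increment_children (hx : ∀ k, -1 ≤ x k) :
    (increment x · i) '' children x i = Icc (max (typeOf x i) 0) (x (i - 1)) :=
  Subset.antisymm (image_subset_iff.2 fun _ => increment_mem_Icc_of_mem_children)
    fun _ hv => exists_mem_children_increment_eq hx hv

theorem max_typeOf_zero_le_add_one (hx : ∀ k, -1 ≤ x k) :
    max (typeOf x i) 0 ≤ x (i - 1) + 1 := by
  have htype := typeOf_le (x := x) (sub_one_lt i)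
  rw [increment_sub_one] at htype
  have := hx (i - 1)
  omega

end

/-- For a skip-free to the left sequence `x` (`x k ≥ -1` for all `k`) and every integer `i`,
the set of children of `i` in the record graph of `x` is finite and its cardinality equals
`x (i-1) + 1 - max (t_x(i), 0)`: it equals `x (i-1) + 1` when `t_x(i) = -1` and
`x (i-1) + 1 - t_x(i)` when `t_x(i) ≥ 0`. -/
theorem card_children_eq_sub_type (x : ℤ → ℤ) (hx : ∀ k : ℤ, -1 ≤ x k) (i : ℤ) :
    {j : ℤ | j ≠ i ∧ recordMap x j = i}.Finite ∧
      ({j : ℤ | j ≠ i ∧ recordMap x j = i}.ncard : ℤ)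
        = x (i - 1) + 1 - max (typeOf x i) 0 := by
  change (children x i).Finite ∧ ((children x i).ncard : ℤ) = _
  have himage := image_increment_children (i := i) hx
  have hinj := injOn_increment_children (x := x) (i := i)
  refine ⟨Finite.of_finite_image (himage ▸ finite_Icc _ _) hinj, ?_⟩
  rw [← hinj.ncard_image, himage, ← Finset.coe_Icc, ncard_coe_finset,
    Int.card_Icc_of_le _ _ (max_typeOf_zero_le_add_one hx)]
end

section
/- Let (X_n)_{n ≥ 0} be an i.i.d. sequence of integer-valued random variables with ℙ[X_0 ≥ -1] = 1, and let (S_n) be the associated skip-free to the left random walk. Let τ = inf{n > 0 : S_n ≥ 0} be the weak upper record epoch. Then for all integers j, k with 0 ≤ j ≤ k, ℙ[τ < ∞, S_τ = j, X_{τ-1} = k] = ℙ[X_0 = k] · c^{k-j}, where c = ℙ[∃ n ≥ 0, S_n = -1]. -/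
/-!
We work on the canonical space `ℕ → ℤ` of increment sequences with the law
`ν = ⨂ p`, `p` the law of `X 0`. Splitting according to `τ = t + 1`, the event is the
intersection of `{S_m < 0 for 0 < m ≤ t, S_t = j - k}` with `{X_t = k}`, and the two are
independent. Reversing the first `t` increments preserves `ν` and turns the first event into
"the walk first reaches `j - k` at time `t`"; as a skip-free walk cannot jump over a level below
it, summing over `t` gives `ν[hit j - k]`. The same first-passage decomposition, with
independence of the walk after the first passage time, gives `ν[hit a + b] = ν[hit a] ν[hit b]`
for `a, b ≤ 0`, whence `ν[hit -(k - j)] = c ^ (k - j)`.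
-/

open MeasureTheory ProbabilityTheory Finset Function

theorem ProbabilityTheory.iIndepFun.indepFun_restrict_of_disjoint {Ω ι α : Type*}
    {mΩ : MeasurableSpace Ω} {μ : Measure Ω} [mα : MeasurableSpace α] {X : ι → Ω → α}
    (hX : ∀ i, Measurable (X i)) (h : iIndepFun X μ) {S T : Set ι} (hST : Disjoint S T) :
    IndepFun (fun ω (i : S) => X i ω) (fun ω (i : T) => X i ω) μ := by
  have hrestrict :
      ∀ U : Set ι, Measurable[⨆ i ∈ U, mα.comap (X i)] fun ω (i : U) => X i ω :=
    fun U => @measurable_pi_lambda _ _ _ (⨆ i ∈ U, mα.comap (X i)) _ _ fun i =>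
      (comap_measurable (X i)).mono
        (le_iSup₂ (f := fun j (_ : j ∈ U) => mα.comap (X j)) i i.2) le_rfl
  rw [IndepFun_iff_Indep]
  exact indep_of_indep_of_le_right
    (indep_of_indep_of_le_left (indep_iSup_of_disjoint (fun i => (hX i).comap_le) h.iIndep hST)
      (hrestrict S).comap_le) (hrestrict T).comap_le

theorem MeasureTheory.Measure.infinitePi_map_comp_of_injective {ι ι' α : Type*}
    [MeasurableSpace α] (p : Measure α) [IsProbabilityMeasure p] {e : ι' → ι}
    (he : e.Injective) :
    (infinitePi fun _ : ι => p).map (fun x i => x (e i)) = infinitePi fun _ : ι' => p := by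
  have h := (iIndepFun_infinitePi (P := fun _ : ι => p) (X := fun _ => id)
    fun _ => measurable_id).precomp he
  rw [h.map_fun_eq_infinitePi_map fun i => measurable_pi_apply (e i)]
  simp_rw [infinitePi_map_eval]

namespace SkipFreeWalk

def partialSum (x : ℕ → ℤ) (n : ℕ) : ℤ := ∑ l ∈ range n, x l

def shift (s : ℕ) (x : ℕ → ℤ) : ℕ → ℤ := fun l => x (s + l)

def truncate (s : ℕ) (x : ℕ → ℤ) : ℕ → ℤ := fun l => if l < s then x l else 0

def reverse (t : ℕ) (x : ℕ → ℤ) : ℕ → ℤ := fun l => x (if l < t then t - 1 - l else l)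

def hits (a : ℤ) : Set (ℕ → ℤ) := {x | ∃ n, partialSum x n = a}

def firstPassage (a : ℤ) (t : ℕ) : Set (ℕ → ℤ) :=
  {x | (∀ r < t, a < partialSum x r) ∧ partialSum x t = a}

def negativeUntil (a : ℤ) (t : ℕ) : Set (ℕ → ℤ) :=
  {x | (∀ m, 0 < m → m ≤ t → partialSum x m < 0) ∧ partialSum x t = a}

def weakRecord (j k : ℤ) : Set (ℕ → ℤ) :=
  {x | ∃ n, 0 < n ∧ (∀ m, 0 < m → m < n → partialSum x m < 0) ∧
    partialSum x n = j ∧ x (n - 1) = k}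

@[simp] lemma partialSum_zero (x : ℕ → ℤ) : partialSum x 0 = 0 := rfl

lemma partialSum_succ (x : ℕ → ℤ) (n : ℕ) : partialSum x (n + 1) = partialSum x n + x n :=
  sum_range_succ _ _

lemma partialSum_shift (s : ℕ) (x : ℕ → ℤ) (n : ℕ) :
    partialSum (shift s x) n = partialSum x (s + n) - partialSum x s := by
  simp only [partialSum, shift, sum_range_add, add_sub_cancel_left]

lemma partialSum_truncate {s r : ℕ} (hr : r ≤ s) (x : ℕ → ℤ) :
    partialSum (truncate s x) r = partialSum x r :=
  sum_congr rfl fun _ hl => if_pos ((mem_range.mp hl).trans_le hr)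

lemma partialSum_reverse {t m : ℕ} (hm : m ≤ t) (x : ℕ → ℤ) :
    partialSum (reverse t x) m = partialSum x t - partialSum x (t - m) := by
  induction m with
  | zero => simp
  | succ m ih =>
    have h := partialSum_succ x (t - (m + 1))
    rw [show t - (m + 1) + 1 = t - m by omega] at h
    rw [partialSum_succ, ih (by omega), reverse, if_pos (by omega),
      show t - 1 - m = t - (m + 1) by omega]
    linarith

lemma reverse_preimage_negativeUntil (a : ℤ) (t : ℕ) :
    reverse t ⁻¹' negativeUntil a t = firstPassage a t := by
  ext x
  simp only [Set.mem_preimage, negativeUntil, firstPassage, Set.mem_ofPred_eq,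
    partialSum_reverse le_rfl, Nat.sub_self, partialSum_zero, sub_zero]
  refine and_congr_left fun hend => ⟨fun h r hr => ?_, fun h m hm hmt => ?_⟩
  · have := h (t - r) (by omega) (by omega)
    rw [partialSum_reverse (by omega), Nat.sub_sub_self hr.le] at this
    linarith
  · have := h (t - m) (by omega)
    rw [partialSum_reverse hmt]
    linarith

lemma truncate_preimage_firstPassage (a : ℤ) (t : ℕ) :
    truncate t ⁻¹' firstPassage a t = firstPassage a t := by
  ext x
  simp +contextual only [Set.mem_preimage, firstPassage, Set.mem_ofPred_eq,
    partialSum_truncate le_rfl, partialSum_truncate (Nat.le_of_lt _)]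

lemma truncate_preimage_negativeUntil (a : ℤ) (t : ℕ) :
    truncate t ⁻¹' negativeUntil a t = negativeUntil a t := by
  ext x
  simp +contextual only [Set.mem_preimage, negativeUntil, Set.mem_ofPred_eq,
    partialSum_truncate le_rfl, partialSum_truncate]

lemma hits_zero : hits 0 = Set.univ :=
  Set.eq_univ_of_forall fun _ => ⟨0, rfl⟩

lemma firstPassage_subset_hits (a : ℤ) (t : ℕ) : firstPassage a t ⊆ hits a :=
  fun _ hx => ⟨t, hx.2⟩

lemma pairwise_disjoint_firstPassage (a : ℤ) : Pairwise (Disjoint on (firstPassage a)) :=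
  (pairwise_disjoint_on _).mpr fun _ _ hst =>
    Set.disjoint_left.mpr fun _ hs ht => (ht.1 _ hst).ne' hs.2

lemma exists_firstPassage_of_partialSum_le {x : ℕ → ℤ} (hx : ∀ l, -1 ≤ x l) {a : ℤ}
    (ha : a ≤ 0) {n : ℕ} (hn : partialSum x n ≤ a) : ∃ t ≤ n, x ∈ firstPassage a t := by
  classical
  have hex : ∃ n, partialSum x n ≤ a := ⟨n, hn⟩
  set t := Nat.find hex
  have hbelow : ∀ r < t, a < partialSum x r := fun r hr => not_le.mp (Nat.find_min hex hr)
  refine ⟨t, Nat.find_min' hex hn, hbelow, le_antisymm (Nat.find_spec hex) ?_⟩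
  rcases Nat.eq_zero_or_pos t with h0 | hpos
  · simpa [h0] using ha
  · have hstep := partialSum_succ x (t - 1)
    rw [Nat.sub_add_cancel hpos] at hstep
    have := hbelow (t - 1) (by omega)
    have := hx (t - 1)
    omega

lemma mem_hits_add_iff {x : ℕ → ℤ} (hx : ∀ l, -1 ≤ x l) {a b : ℤ} (ha : a ≤ 0)
    (hb : b ≤ 0) :
    x ∈ hits (a + b) ↔ ∃ s, x ∈ firstPassage a s ∧ shift s x ∈ hits b := by
  constructor
  · rintro ⟨n, hn⟩
    obtain ⟨s, hsn, hs⟩ := exists_firstPassage_of_partialSum_le hx ha (n := n) (by omega)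
    refine ⟨s, hs, n - s, ?_⟩
    rw [partialSum_shift, Nat.add_sub_cancel' hsn, hn, hs.2]
    ring
  · rintro ⟨s, hs, n, hn⟩
    refine ⟨s + n, ?_⟩
    rw [partialSum_shift, hs.2] at hn
    omega

lemma weakRecord_eq_iUnion (j k : ℤ) :
    weakRecord j k = ⋃ t, negativeUntil (j - k) t ∩ shift t ⁻¹' {y | y 0 = k} := by
  ext x
  simp only [weakRecord, negativeUntil, shift, Set.mem_iUnion, Set.mem_inter_iff,
    Set.mem_preimage, Set.mem_ofPred_eq, add_zero]
  constructor
  · rintro ⟨n, hn, hneg, hsum, hlast⟩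
    obtain ⟨t, rfl⟩ := Nat.exists_eq_add_one_of_ne_zero hn.ne'
    rw [partialSum_succ] at hsum
    rw [Nat.add_sub_cancel] at hlast
    exact ⟨t, ⟨fun m hm hmt => hneg m hm (by omega), by omega⟩, hlast⟩
  · rintro ⟨t, ⟨hneg, hsum⟩, hlast⟩
    refine ⟨t + 1, t.succ_pos, fun m hm hmt => hneg m hm (by omega), ?_, hlast⟩
    rw [partialSum_succ]
    omega

lemma pairwise_disjoint_negativeUntil_inter {j : ℤ} (hj : 0 ≤ j) (k : ℤ) :
    Pairwise (Disjoint on fun t => negativeUntil (j - k) t ∩ shift t ⁻¹' {y | y 0 = k}) := by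
  refine (pairwise_disjoint_on _).mpr fun s t hst => Set.disjoint_left.mpr ?_
  -- at time `s + 1 ≤ t` the walk would be at `j ≥ 0`
  rintro x ⟨⟨_, hs⟩, hlast⟩ ⟨⟨hneg, _⟩, _⟩
  have := hneg (s + 1) s.succ_pos hst
  simp only [shift, Set.mem_preimage, Set.mem_ofPred_eq, add_zero] at hlast
  rw [partialSum_succ] at this
  omega

@[fun_prop]
lemma measurable_partialSum (n : ℕ) : Measurable fun x : ℕ → ℤ => partialSum x n :=
  Finset.measurable_sum _ fun l _ => measurable_pi_apply l

lemma measurable_shift (s : ℕ) : Measurable (shift s) :=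
  measurable_pi_lambda _ fun l => measurable_pi_apply (s + l)

lemma measurable_reverse (t : ℕ) : Measurable (reverse t) :=
  measurable_pi_lambda _ fun _ => measurable_pi_apply _

lemma measurableSet_firstPassage (a : ℤ) (t : ℕ) : MeasurableSet (firstPassage a t) := by
  unfold firstPassage; measurability

lemma measurableSet_negativeUntil (a : ℤ) (t : ℕ) : MeasurableSet (negativeUntil a t) := by
  unfold negativeUntil; measurability

lemma measurableSet_hits (a : ℤ) : MeasurableSet (hits a) := by
  unfold hits; measurability

lemma measurableSet_weakRecord (j k : ℤ) : MeasurableSet (weakRecord j k) := by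
  unfold weakRecord; measurability

section Law

variable (p : Measure ℤ) [IsProbabilityMeasure p]

local notation "ν" => Measure.infinitePi fun _ : ℕ => p

lemma map_shift (s : ℕ) : (ν).map (shift s) = ν :=
  Measure.infinitePi_map_comp_of_injective p (add_right_injective s)

lemma map_reverse (t : ℕ) : (ν).map (reverse t) = ν := by
  refine Measure.infinitePi_map_comp_of_injective p fun l l' h => ?_
  split_ifs at h <;> omega

lemma indepFun_truncate_shift (s : ℕ) : IndepFun (truncate s) (shift s) ν := by
  have h := (iIndepFun_infinitePi (P := fun _ : ℕ => p) (X := fun _ => id) fun _ => measurable_id)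
    |>.indepFun_restrict_of_disjoint (fun l => measurable_pi_apply l)
      (S := Set.Iio s) (T := Set.Ici s) (Set.Iio_disjoint_Ici le_rfl)
  exact h.comp (φ := fun (v : Set.Iio s → ℤ) l => if hl : l < s then v ⟨l, hl⟩ else 0)
    (ψ := fun (v : Set.Ici s → ℤ) l => v ⟨s + l, Nat.le_add_right s l⟩)
    (measurable_pi_lambda _ fun l => by by_cases hl : l < s <;> simp [hl, measurable_pi_apply])
    (by fun_prop)

/-- `truncate s ⁻¹' P = P` says that `P` only depends on the first `s` increments. -/
lemma measure_inter_shift_preimage {s : ℕ} {P F : Set (ℕ → ℤ)} (hP : MeasurableSet P)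
    (hPs : truncate s ⁻¹' P = P) (hF : MeasurableSet F) :
    ν (P ∩ shift s ⁻¹' F) = ν P * ν F := by
  rw [← hPs, (indepFun_truncate_shift p s).measure_inter_preimage_eq_mul _ _ hP hF,
    ← Measure.map_apply (measurable_shift s) hF, map_shift]

lemma measure_negativeUntil (a : ℤ) (t : ℕ) :
    ν (negativeUntil a t) = ν (firstPassage a t) := by
  rw [← reverse_preimage_negativeUntil, ← Measure.map_apply (measurable_reverse t)
    (measurableSet_negativeUntil a t), map_reverse]

lemma measure_setOf_eval_eq (l : ℕ) (k : ℤ) : ν {y | y l = k} = p {k} := by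
  have h := Measure.map_apply (μ := ν) (measurable_pi_apply l) (measurableSet_singleton k)
  rwa [Measure.infinitePi_map_eval, eq_comm] at h

variable {p}

lemma ae_skipFree (hp : ∀ᵐ z ∂p, -1 ≤ z) : ∀ᵐ x ∂ν, ∀ l, -1 ≤ x l :=
  ae_all_iff.mpr fun l => ae_of_ae_map (measurable_pi_apply l).aemeasurable
    ((Measure.infinitePi_map_eval (fun _ : ℕ => p) l).symm ▸ hp)

lemma measure_hits_eq_tsum_firstPassage (hp : ∀ᵐ z ∂p, -1 ≤ z) {a : ℤ} (ha : a ≤ 0) :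
    ν (hits a) = ∑' t, ν (firstPassage a t) := by
  rw [← measure_iUnion (pairwise_disjoint_firstPassage a) (measurableSet_firstPassage a)]
  refine measure_congr (Filter.eventuallyEq_set.mpr ?_)
  filter_upwards [ae_skipFree hp] with x hx
  simp only [Set.mem_iUnion]
  exact ⟨fun ⟨_, hn⟩ =>
      (exists_firstPassage_of_partialSum_le hx ha hn.le).imp fun _ => And.right,
    fun ⟨t, ht⟩ => firstPassage_subset_hits a t ht⟩

lemma measure_hits_add (hp : ∀ᵐ z ∂p, -1 ≤ z) {a b : ℤ} (ha : a ≤ 0) (hb : b ≤ 0) :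
    ν (hits (a + b)) = ν (hits a) * ν (hits b) := by
  have hdisj : Pairwise (Disjoint on fun s => firstPassage a s ∩ shift s ⁻¹' hits b) :=
    fun s t hst => (pairwise_disjoint_firstPassage a hst).mono Set.inter_subset_left
      Set.inter_subset_left
  calc ν (hits (a + b)) = ν (⋃ s, firstPassage a s ∩ shift s ⁻¹' hits b) := by
        refine measure_congr (Filter.eventuallyEq_set.mpr ?_)
        filter_upwards [ae_skipFree hp] with x hx
        simp only [Set.mem_iUnion, Set.mem_inter_iff, Set.mem_preimage]
        exact mem_hits_add_iff hx ha hb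
    _ = ∑' s, ν (firstPassage a s) * ν (hits b) := by
        rw [measure_iUnion hdisj fun s => (measurableSet_firstPassage a s).inter
          (measurable_shift s (measurableSet_hits b))]
        exact tsum_congr fun s => measure_inter_shift_preimage p (measurableSet_firstPassage a s)
          (truncate_preimage_firstPassage a s) (measurableSet_hits b)
    _ = ν (hits a) * ν (hits b) := by
        rw [ENNReal.tsum_mul_right, measure_hits_eq_tsum_firstPassage hp ha]

lemma measure_hits_neg_natCast (hp : ∀ᵐ z ∂p, -1 ≤ z) (d : ℕ) :
    ν (hits (-d)) = ν (hits (-1)) ^ d := by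
  induction d with
  | zero => simp [hits_zero]
  | succ d ih =>
    rw [Nat.cast_succ, neg_add', sub_eq_neg_add, measure_hits_add hp (by omega) (by omega), ih,
      pow_succ']

lemma measure_weakRecord (hp : ∀ᵐ z ∂p, -1 ≤ z) {j k : ℤ} (hj : 0 ≤ j) (hjk : j ≤ k) :
    ν (weakRecord j k) = p {k} * ν (hits (-1)) ^ (k - j).toNat := by
  have hk : MeasurableSet {y : ℕ → ℤ | y 0 = k} :=
    measurableSet_eq_fun (measurable_pi_apply 0) measurable_const
  calc ν (weakRecord j k)
      = ∑' t, ν (negativeUntil (j - k) t ∩ shift t ⁻¹' {y | y 0 = k}) := by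
        rw [weakRecord_eq_iUnion, measure_iUnion (pairwise_disjoint_negativeUntil_inter hj k)
          fun t => (measurableSet_negativeUntil _ t).inter (measurable_shift t hk)]
    _ = ∑' t, ν (firstPassage (j - k) t) * p {k} := tsum_congr fun t => by
        rw [measure_inter_shift_preimage p (measurableSet_negativeUntil _ t)
          (truncate_preimage_negativeUntil _ t) hk,
          measure_negativeUntil, measure_setOf_eval_eq]
    _ = ν (hits (-(k - j).toNat)) * p {k} := by
        rw [ENNReal.tsum_mul_right, measure_hits_eq_tsum_firstPassage hp (by omega),
          Int.toNat_of_nonneg (by omega), neg_sub]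
    _ = p {k} * ν (hits (-1)) ^ (k - j).toNat := by
        rw [measure_hits_neg_natCast hp, mul_comm]

end Law

end SkipFreeWalk

open SkipFreeWalk in
/-- Joint law of the weak upper record of a skip-free to the left random walk: with
`τ = inf {n > 0 : S_n ≥ 0}`, for all integers `0 ≤ j ≤ k`,
`ℙ[τ < ∞, S_τ = j, X_{τ-1} = k] = ℙ[X_0 = k] · c^(k-j)`, where
`c = ℙ[∃ n, S_n = -1]`.  The event `{τ < ∞, S_τ = j, X_{τ-1} = k}` is written as: there is
`n ≥ 1` with `S_m < 0` for all `0 < m < n`, `S_n = j` and `X_{n-1} = k`. -/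
theorem weak_record_joint_law {Ω : Type*} [MeasurableSpace Ω] (μ : Measure Ω)
    [IsProbabilityMeasure μ] (X : ℕ → Ω → ℤ)
    (hmeas : ∀ n, Measurable (X n))
    (hindep : iIndepFun X μ)
    (hident : ∀ n, IdentDistrib (X n) (X 0) μ μ)
    (hskip : ∀ᵐ ω ∂μ, -1 ≤ X 0 ω)
    (j k : ℤ) (hj : 0 ≤ j) (hjk : j ≤ k) :
    μ {ω | ∃ n : ℕ, 0 < n ∧
        (∀ m : ℕ, 0 < m → m < n → ∑ l ∈ Finset.range m, X l ω < 0) ∧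
        ∑ l ∈ Finset.range n, X l ω = j ∧ X (n - 1) ω = k} =
      μ {ω | X 0 ω = k} *
        (μ {ω | ∃ n : ℕ, ∑ l ∈ Finset.range n, X l ω = -1}) ^ (k - j).toNat := by
  have hY : Measurable fun ω l => X l ω := measurable_pi_lambda _ hmeas
  have : IsProbabilityMeasure (μ.map (X 0)) :=
    Measure.isProbabilityMeasure_map (hmeas 0).aemeasurable
  have hlaw : μ.map (fun ω l => X l ω) = Measure.infinitePi fun _ => μ.map (X 0) := by
    rw [hindep.map_fun_eq_infinitePi_map hmeas]
    simp_rw [(hident _).map_eq]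
  have hp : ∀ᵐ z ∂μ.map (X 0), -1 ≤ z :=
    (ae_map_iff (hmeas 0).aemeasurable (measurableSet_le measurable_const measurable_id)).mpr hskip
  have hlaw_apply : ∀ C, MeasurableSet C → μ ((fun ω l => X l ω) ⁻¹' C) =
      Measure.infinitePi (fun _ => μ.map (X 0)) C := fun C hC => by
    rw [← hlaw, Measure.map_apply hY hC]
  show μ ((fun ω l => X l ω) ⁻¹' weakRecord j k) =
    μ (X 0 ⁻¹' {k}) * μ ((fun ω l => X l ω) ⁻¹' hits (-1)) ^ (k - j).toNat
  rw [hlaw_apply _ (measurableSet_weakRecord j k), hlaw_apply _ (measurableSet_hits (-1)),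
    ← Measure.map_apply (hmeas 0) (measurableSet_singleton k)]
  exact measure_weakRecord hp hj hjk
end

section
/- Let (X_n)_{n ≥ 0} be an i.i.d. sequence of integer-valued random variables with ℙ[X_0 ≥ -1] = 1, and let (S_n) be the associated skip-free to the left random walk. Let n ≥ 1 and let x_1, …, x_n be integers with x_i ≥ -1 for all i, with x_1 + ⋯ + x_m ≥ 0 for every m < n, and with x_1 + ⋯ + x_n ≥ -1. Then ℙ[X_0 = x_1, X_1 = x_2, …, X_{n-1} = x_n, η_{-1} < ∞] = c · ∏_{i=1}^{n} ( ℙ[X_0 = x_i] · c^{x_i} ), where η_{-1} = inf{m ≥ 0 : S_m = -1} and c = ℙ[η_{-1} < ∞]. (In other words, conditioned on η_{-1} < ∞, the walk stopped at η_{-1} is the skip-free walk with the Doob-transformed increment distribution k ↦ ℙ[X_0 = k] c^k, stopped at its hitting time of -1.) -/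
/-!
Let `c_t` be the probability that the walk ever reaches `t`. Since the steps are `≥ -1`, the
walk reaches `-(k+1)` only after a first visit to `-1`; splitting according to the time of that
visit, independence of past and future together with shift invariance of the i.i.d. law give
`c_{-(k+1)} = c_{-1} c_{-k}`, hence `c_{-k} = c^k`. On the event `X i = xs i` (`i < n`) the walk
stays `≥ 0` before time `n` and is at `s = ∑ xs i` at time `n`, so it hits `-1` iff the walk
restarted at time `n` reaches `-1 - s`: an event independent of the prefix, of probability
`c^(1+s) = c ∏ c^(xs i)`. If `c = 0` both sides vanish.
-/

open MeasureTheory ProbabilityTheory Finset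

lemma ENNReal.prod_mul_zpow {c : ENNReal} (hc0 : c ≠ 0) (hct : c ≠ ⊤) (p : ℕ → ENNReal)
    (x : ℕ → ℤ) (s : Finset ℕ) :
    ∏ i ∈ s, (p i * c ^ x i) = (∏ i ∈ s, p i) * c ^ ∑ i ∈ s, x i := by
  classical
  induction s using Finset.induction_on with
  | empty => simp
  | insert a s ha ih =>
    rw [prod_insert ha, prod_insert ha, sum_insert ha, ih, ENNReal.zpow_add hc0 hct]
    ring

lemma measurable_forall_lt {Ω : Type*} {_ : MeasurableSpace Ω} {n : ℕ} {p : ℕ → Ω → Prop}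
    (hp : ∀ i < n, Measurable (p i)) : Measurable fun ω => ∀ i < n, p i ω := by
  refine Measurable.forall fun i => ?_
  by_cases hi : i < n
  · exact measurable_const.imp (hp i hi)
  · simp only [hi, false_implies]
    exact measurable_const

namespace SkipFreeWalk

section Sequences

def hitSet (t : ℤ) : Set (ℕ → ℤ) :=
  {f | ∃ m, ∑ l ∈ range m, f l = t}

def firstHitSet (t : ℤ) (m : ℕ) : Set (ℕ → ℤ) :=
  {f | ∑ l ∈ range m, f l = t ∧ ∀ i < m, ∑ l ∈ range i, f l ≠ t}

def shiftSeq {β : Type*} (j : ℕ) (f : ℕ → β) : ℕ → β :=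
  fun l => f (j + l)

@[simp]
lemma shiftSeq_zero {β : Type*} : shiftSeq 0 = @id (ℕ → β) := by
  ext f l; simp [shiftSeq]

lemma mem_hitSet_iff_shiftSeq {f : ℕ → ℤ} {n : ℕ} {t : ℤ}
    (h : ∀ m < n, ∑ l ∈ range m, f l ≠ t) :
    f ∈ hitSet t ↔ shiftSeq n f ∈ hitSet (t - ∑ l ∈ range n, f l) := by
  have hsplit : ∀ r, ∑ l ∈ range (n + r), f l =
      ∑ l ∈ range n, f l + ∑ l ∈ range r, shiftSeq n f l := sum_range_add f n
  constructor
  · rintro ⟨m, hm⟩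
    have hnm : n ≤ m := by
      by_contra! hmn
      exact h m hmn hm
    refine ⟨m - n, ?_⟩
    have := hsplit (m - n)
    rw [Nat.add_sub_cancel' hnm] at this
    omega
  · rintro ⟨r, hr⟩
    exact ⟨n + r, by rw [hsplit]; omega⟩

lemma pairwise_disjoint_firstHitSet (t : ℤ) :
    Pairwise (Function.onFun Disjoint (firstHitSet t)) := by
  intro m m' hne
  rw [Function.onFun, Set.disjoint_left]
  rintro f ⟨hm, hbefore⟩ ⟨hm', hbefore'⟩
  rcases hne.lt_or_gt with h | h
  · exact hbefore' m h hm
  · exact hbefore m' h hm'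

lemma iUnion_firstHitSet (t : ℤ) : ⋃ m, firstHitSet t m = hitSet t := by
  ext f
  simp only [Set.mem_iUnion, firstHitSet, hitSet, Set.mem_ofPred_eq]
  constructor
  · rintro ⟨m, hm, -⟩
    exact ⟨m, hm⟩
  · intro hex
    exact ⟨Nat.find hex, Nat.find_spec hex, fun i hi => Nat.find_min hex hi⟩

lemma mem_hitSet_neg_one_iff_of_prefix {f xs : ℕ → ℤ} {n : ℕ}
    (hprefix : ∀ i < n, f i = xs i) (hpartial : ∀ m < n, 0 ≤ ∑ i ∈ range m, xs i) :
    f ∈ hitSet (-1) ↔ shiftSeq n f ∈ hitSet (-1 - ∑ i ∈ range n, xs i) := by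
  have hsum : ∀ m ≤ n, ∑ i ∈ range m, f i = ∑ i ∈ range m, xs i :=
    fun m hm => sum_congr rfl fun i hi => hprefix i (by simp at hi; omega)
  rw [mem_hitSet_iff_shiftSeq fun m hm => by have := hpartial m hm; rw [hsum m hm.le]; omega,
    hsum n le_rfl]

lemma measurableSet_hitSet (t : ℤ) : MeasurableSet (hitSet t) :=
  Measurable.setOf (by fun_prop)

variable {f : ℕ → ℤ}

lemma sum_range_nonneg_of_forall_ne_neg_one (hf : ∀ l, -1 ≤ f l) {m : ℕ}
    (h : ∀ i < m, ∑ l ∈ range i, f l ≠ -1) : ∀ i < m, 0 ≤ ∑ l ∈ range i, f l := by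
  intro i hi
  induction i with
  | zero => simp
  | succ i ih =>
    have := ih (by omega)
    have := h (i + 1) hi
    have := hf i
    rw [sum_range_succ] at *
    omega

lemma exists_mem_firstHitSet_of_sum_range_le (hf : ∀ l, -1 ≤ f l) {j : ℕ}
    (hj : ∑ l ∈ range j, f l ≤ -1) : ∃ m, f ∈ firstHitSet (-1) m := by
  suffices f ∈ hitSet (-1) by simpa [← iUnion_firstHitSet] using this
  by_contra hnot
  have hne : ∀ i < j + 1, ∑ l ∈ range i, f l ≠ -1 := fun i _ hi => hnot ⟨i, hi⟩
  have := sum_range_nonneg_of_forall_ne_neg_one hf hne j j.lt_succ_self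
  omega

lemma mem_hitSet_neg_succ_iff (hf : ∀ l, -1 ≤ f l) (k : ℕ) :
    f ∈ hitSet (-(k + 1 : ℕ)) ↔
      ∃ m, f ∈ firstHitSet (-1) m ∧ shiftSeq m f ∈ hitSet (-k) := by
  have key : ∀ m, f ∈ firstHitSet (-1) m →
      (f ∈ hitSet (-(k + 1 : ℕ)) ↔ shiftSeq m f ∈ hitSet (-k)) := by
    rintro m ⟨hm, hbefore⟩
    have hnonneg := sum_range_nonneg_of_forall_ne_neg_one hf hbefore
    rw [mem_hitSet_iff_shiftSeq fun i hi => by have := hnonneg i hi; omega, hm]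
    congr! 2
    push_cast
    ring
  constructor
  · rintro ⟨j, hj⟩
    obtain ⟨m, hm⟩ := exists_mem_firstHitSet_of_sum_range_le hf (j := j) (by omega)
    exact ⟨m, hm, (key m hm).1 ⟨j, hj⟩⟩
  · rintro ⟨m, hm, hshift⟩
    exact (key m hm).2 hshift

end Sequences

section Past

variable {Ω β : Type*} [MeasurableSpace β] {X : ℕ → Ω → β}

def path (X : ℕ → Ω → β) (ω : Ω) : ℕ → β :=
  fun l => X l ω

abbrev past (X : ℕ → Ω → β) (j : ℕ) : MeasurableSpace Ω :=
  ⨆ i ∈ Set.Iio j, MeasurableSpace.comap (X i) inferInstance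

lemma measurable_past {j l : ℕ} (hl : l < j) : Measurable[past X j] (X l) :=
  Measurable.of_comap_le <| le_iSup₂ (f := fun i (_ : i ∈ Set.Iio j) =>
    MeasurableSpace.comap (X i) inferInstance) l hl

lemma measurableSet_prefix_past [MeasurableSingletonClass β] (n : ℕ) (xs : ℕ → β) :
    MeasurableSet[past X n] {ω | ∀ i < n, X i ω = xs i} :=
  -- make `past X n` the ambient instance, so that the `Measurable` API applies to it
  let _ : MeasurableSpace Ω := past X n
  Measurable.setOf <| measurable_forall_lt fun i hi => (measurable_past hi).eq_const (xs i)

end Past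

section Shift

variable {Ω β : Type*} [MeasurableSpace Ω] [MeasurableSpace β] {μ : Measure Ω}
  {X : ℕ → Ω → β}

lemma measurable_path (hmeas : ∀ n, Measurable (X n)) : Measurable (path X) :=
  measurable_pi_lambda _ hmeas

lemma measurable_shiftSeq (hmeas : ∀ n, Measurable (X n)) (j : ℕ) :
    Measurable (shiftSeq j ∘ path X) :=
  measurable_pi_lambda _ fun l => hmeas (j + l)

lemma map_shiftSeq_eq_infinitePi [IsProbabilityMeasure μ] (hmeas : ∀ n, Measurable (X n))
    (hindep : iIndepFun X μ) (hident : ∀ n, IdentDistrib (X n) (X 0) μ μ) (j : ℕ) :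
    μ.map (shiftSeq j ∘ path X) = Measure.infinitePi fun _ => μ.map (X 0) := by
  rw [show (shiftSeq j ∘ path X) = fun ω l => X (j + l) ω from rfl,
    (hindep.precomp (add_right_injective j)).map_fun_eq_infinitePi_map fun l => hmeas (j + l)]
  simp only [(hident _).map_eq]

lemma measure_shiftSeq_preimage [IsProbabilityMeasure μ] (hmeas : ∀ n, Measurable (X n))
    (hindep : iIndepFun X μ) (hident : ∀ n, IdentDistrib (X n) (X 0) μ μ) (j : ℕ)
    {B : Set (ℕ → β)} (hB : MeasurableSet B) :
    μ ((shiftSeq j ∘ path X) ⁻¹' B) = μ (path X ⁻¹' B) := by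
  have h0 := map_shiftSeq_eq_infinitePi hmeas hindep hident 0
  rw [shiftSeq_zero, Function.id_comp] at h0
  rw [← Measure.map_apply (measurable_shiftSeq hmeas j) hB,
    ← Measure.map_apply (measurable_path hmeas) hB,
    map_shiftSeq_eq_infinitePi hmeas hindep hident, h0]

lemma past_le (hmeas : ∀ n, Measurable (X n)) (j : ℕ) : past X j ≤ ‹MeasurableSpace Ω› :=
  iSup₂_le fun i _ => (hmeas i).comap_le

lemma measure_inter_shiftSeq_preimage (hmeas : ∀ n, Measurable (X n)) (hindep : iIndepFun X μ)
    {j : ℕ} {A : Set Ω} (hA : MeasurableSet[past X j] A) {B : Set (ℕ → β)}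
    (hB : MeasurableSet B) :
    μ (A ∩ (shiftSeq j ∘ path X) ⁻¹' B) =
      μ A * μ ((shiftSeq j ∘ path X) ⁻¹' B) := by
  let future : MeasurableSpace Ω :=
    ⨆ i ∈ (Set.Iio j)ᶜ, MeasurableSpace.comap (X i) inferInstance
  have hfuture : Measurable[future] (shiftSeq j ∘ path X) := by
    refine @measurable_pi_lambda Ω ℕ (fun _ => β) future _ _ fun l => ?_
    exact Measurable.of_comap_le <| le_iSup₂ (f := fun i (_ : i ∈ (Set.Iio j)ᶜ) =>
      MeasurableSpace.comap (X i) inferInstance) (j + l) (by simp)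
  exact (Indep_iff _ _ _).1 (indep_biSup_compl (fun i => (hmeas i).comap_le) hindep.iIndep _)
    A _ hA (hfuture hB)

lemma measure_prefix_eq_prod [MeasurableSingletonClass β] (hindep : iIndepFun X μ)
    (hident : ∀ n, IdentDistrib (X n) (X 0) μ μ) (n : ℕ) (xs : ℕ → β) :
    μ {ω | ∀ i < n, X i ω = xs i} = ∏ i ∈ range n, μ {ω | X 0 ω = xs i} := by
  have hA : {ω | ∀ i < n, X i ω = xs i} = ⋂ i ∈ range n, X i ⁻¹' {xs i} := by
    ext ω; simp
  rw [hA, hindep.meas_biInter fun i _ => ⟨{xs i}, measurableSet_singleton _, rfl⟩]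
  exact prod_congr rfl fun i _ => (hident i).measure_mem_eq (measurableSet_singleton _)

end Shift

section Walk

variable {Ω : Type*} {X : ℕ → Ω → ℤ}

lemma measurableSet_preimage_firstHitSet_past (t : ℤ) (m : ℕ) :
    MeasurableSet[past X m] (path X ⁻¹' firstHitSet t m) := by
  let _ : MeasurableSpace Ω := past X m
  have hsum : ∀ i ≤ m, Measurable fun ω => ∑ l ∈ range i, X l ω :=
    fun i hi => Finset.measurable_sum _ fun l hl => measurable_past (by simp at hl; omega)
  exact Measurable.setOf <| ((hsum m le_rfl).eq_const t).and <|
    measurable_forall_lt fun i hi => ((hsum i hi.le).eq_const t).not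

lemma measure_hitSet_neg_natCast [MeasurableSpace Ω] {μ : Measure Ω} [IsProbabilityMeasure μ]
    (hmeas : ∀ n, Measurable (X n)) (hindep : iIndepFun X μ)
    (hident : ∀ n, IdentDistrib (X n) (X 0) μ μ) (hskip : ∀ᵐ ω ∂μ, -1 ≤ X 0 ω)
    (k : ℕ) :
    μ (path X ⁻¹' hitSet (-k)) = μ (path X ⁻¹' hitSet (-1)) ^ k := by
  induction k with
  | zero =>
    simp only [CharP.cast_eq_zero, neg_zero, pow_zero]
    rw [show hitSet 0 = Set.univ from Set.eq_univ_of_forall fun f => ⟨0, sum_range_zero f⟩,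
      Set.preimage_univ, measure_univ]
  | succ k ih =>
    have hskip_all : ∀ᵐ ω ∂μ, ∀ i, -1 ≤ X i ω :=
      ae_all_iff.2 fun i => (hident i).symm.ae_snd (.of_discrete) hskip
    have hfirst : ∀ m, MeasurableSet (path X ⁻¹' firstHitSet (-1) m) :=
      fun m => past_le hmeas m _ (measurableSet_preimage_firstHitSet_past _ m)
    have hdisj : Pairwise (Function.onFun Disjoint fun m => path X ⁻¹' firstHitSet (-1) m) :=
      fun m m' h => (pairwise_disjoint_firstHitSet _ h).preimage _
    have hdecomp : path X ⁻¹' hitSet (-(k + 1 : ℕ)) =ᵐ[μ]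
        ⋃ m, path X ⁻¹' firstHitSet (-1) m ∩ (shiftSeq m ∘ path X) ⁻¹' hitSet (-k) := by
      refine Filter.eventuallyEq_set.2 ?_
      filter_upwards [hskip_all] with ω hω
      rw [Set.mem_iUnion]
      exact mem_hitSet_neg_succ_iff hω k
    rw [measure_congr hdecomp, measure_iUnion
      (fun m m' h => (hdisj h).mono Set.inter_subset_left Set.inter_subset_left)
      fun m => (hfirst m).inter (measurable_shiftSeq hmeas m (measurableSet_hitSet _))]
    calc ∑' m, μ (path X ⁻¹' firstHitSet (-1) m ∩
          (shiftSeq m ∘ path X) ⁻¹' hitSet (-k))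
        = ∑' m, μ (path X ⁻¹' firstHitSet (-1) m) * μ (path X ⁻¹' hitSet (-1)) ^ k := by
          congr with m
          rw [measure_inter_shiftSeq_preimage hmeas hindep
            (measurableSet_preimage_firstHitSet_past _ m) (measurableSet_hitSet _),
            measure_shiftSeq_preimage hmeas hindep hident m (measurableSet_hitSet _), ih]
      _ = μ (path X ⁻¹' hitSet (-1)) ^ (k + 1) := by
          rw [ENNReal.tsum_mul_right, ← measure_iUnion hdisj hfirst, ← Set.preimage_iUnion,
            iUnion_firstHitSet, pow_succ, mul_comm]

end Walk

end SkipFreeWalk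

open SkipFreeWalk

theorem conditioned_walk_doob_transform_general {Ω : Type*} [MeasurableSpace Ω] (μ : Measure Ω)
    [IsProbabilityMeasure μ] (X : ℕ → Ω → ℤ)
    (hmeas : ∀ n, Measurable (X n))
    (hindep : iIndepFun X μ)
    (hident : ∀ n, IdentDistrib (X n) (X 0) μ μ)
    (hskip : ∀ᵐ ω ∂μ, -1 ≤ X 0 ω)
    (n : ℕ) (xs : ℕ → ℤ)
    (hpartial : ∀ m < n, 0 ≤ ∑ i ∈ Finset.range m, xs i)
    (htotal : -1 ≤ ∑ i ∈ Finset.range n, xs i) :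
    μ {ω | (∀ i < n, X i ω = xs i) ∧
        ∃ m : ℕ, ∑ l ∈ Finset.range m, X l ω = -1} =
      (μ {ω | ∃ m : ℕ, ∑ l ∈ Finset.range m, X l ω = -1}) *
        ∏ i ∈ Finset.range n,
          (μ {ω | X 0 ω = xs i} *
            (μ {ω | ∃ m : ℕ, ∑ l ∈ Finset.range m, X l ω = -1}) ^ (xs i)) := by
  rw [show {ω | ∃ m : ℕ, ∑ l ∈ range m, X l ω = -1} = path X ⁻¹' hitSet (-1) from rfl]
  set c := μ (path X ⁻¹' hitSet (-1))
  obtain ⟨k, hk⟩ : ∃ k : ℕ, (k : ℤ) = 1 + ∑ i ∈ range n, xs i :=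
    ⟨_, Int.toNat_of_nonneg (by omega)⟩
  have hevent : {ω | (∀ i < n, X i ω = xs i) ∧ ∃ m : ℕ, ∑ l ∈ range m, X l ω = -1} =
      {ω | ∀ i < n, X i ω = xs i} ∩ (shiftSeq n ∘ path X) ⁻¹' hitSet (-k) := by
    ext ω
    refine and_congr_right fun hprefix => ?_
    rw [show -(k : ℤ) = -1 - ∑ i ∈ range n, xs i by omega]
    exact mem_hitSet_neg_one_iff_of_prefix hprefix hpartial
  have hmeasure :
      μ {ω | (∀ i < n, X i ω = xs i) ∧ ∃ m : ℕ, ∑ l ∈ range m, X l ω = -1} =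
        (∏ i ∈ range n, μ {ω | X 0 ω = xs i}) * c ^ k := by
    rw [hevent, measure_inter_shiftSeq_preimage hmeas hindep (measurableSet_prefix_past n xs)
      (measurableSet_hitSet _),
      measure_shiftSeq_preimage hmeas hindep hident n (measurableSet_hitSet _),
      measure_hitSet_neg_natCast hmeas hindep hident hskip, measure_prefix_eq_prod hindep hident]
  rcases eq_or_ne c 0 with hc0 | hc0
  · exact (measure_mono_null (fun ω hω => hω.2) hc0).trans (by simp [hc0])
  · rw [hmeasure, ENNReal.prod_mul_zpow hc0 (measure_ne_top _ _), ← mul_assoc, mul_comm c,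
      mul_assoc, ← zpow_natCast, hk, ENNReal.zpow_add hc0 (measure_ne_top _ _), zpow_one]

/-- The skip-free to the left random walk conditioned to hit `-1` is (up to the hitting
time) the walk with Doob-transformed increment distribution `k ↦ ℙ[X_0 = k] c^k`: for any
`n ≥ 1` and integers `x_1, …, x_n` (here `xs 0, …, xs (n-1)`) with `xs i ≥ -1` for all
`i < n`, partial sums `xs 0 + ⋯ + xs (m-1) ≥ 0` for all `m < n`, and total sum `≥ -1`,
`ℙ[X_0 = x_1, …, X_{n-1} = x_n, η_{-1} < ∞] = c · ∏_{i=1}^n (ℙ[X_0 = x_i] · c^{x_i})`,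
where `η_{-1}` is the hitting time of `-1` and `c = ℙ[η_{-1} < ∞]`. -/
theorem conditioned_walk_doob_transform {Ω : Type*} [MeasurableSpace Ω] (μ : Measure Ω)
    [IsProbabilityMeasure μ] (X : ℕ → Ω → ℤ)
    (hmeas : ∀ n, Measurable (X n))
    (hindep : iIndepFun X μ)
    (hident : ∀ n, IdentDistrib (X n) (X 0) μ μ)
    (hskip : ∀ᵐ ω ∂μ, -1 ≤ X 0 ω)
    (n : ℕ) (hn : 1 ≤ n) (xs : ℕ → ℤ)
    (hxs : ∀ i < n, -1 ≤ xs i)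
    (hpartial : ∀ m < n, 0 ≤ ∑ i ∈ Finset.range m, xs i)
    (htotal : -1 ≤ ∑ i ∈ Finset.range n, xs i) :
    μ {ω | (∀ i < n, X i ω = xs i) ∧
        ∃ m : ℕ, ∑ l ∈ Finset.range m, X l ω = -1} =
      (μ {ω | ∃ m : ℕ, ∑ l ∈ Finset.range m, X l ω = -1}) *
        ∏ i ∈ Finset.range n,
          (μ {ω | X 0 ω = xs i} *
            (μ {ω | ∃ m : ℕ, ∑ l ∈ Finset.range m, X l ω = -1}) ^ (xs i)) :=
  conditioned_walk_doob_transform_general μ X hmeas hindep hident hskip n xs hpartial htotal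
end

section
/- Let (X_n)_{n ≥ 0} be an i.i.d. sequence of integer-valued random variables with ℙ[X_0 ≥ -1] = 1 and ℙ[X_0 = -1] > 0, whose mean exists and lies in (0, ∞] (i.e., the negative part of X_0 is integrable and either X_0 is not integrable or E[X_0] > 0). Then the series ∑_{k = -1}^{∞} k · ℙ[X_0 = k] · c^k converges absolutely and its sum is strictly negative, where c = ℙ[∃ n ≥ 0, S_n = -1]. (That is, the Doob h-transformed increment distribution k ↦ ℙ[X_0 = k] c^k has strictly negative mean.) -/
/-!
Write `p n = ℙ[X₀ = n - 1]` and `F s = ∑ p n sⁿ`. If `0 < s < 1` and `F s ≤ s`, then `s ^ (Sₙ + 1)`,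
stopped when the walk first becomes negative (by skip-freeness, when it hits `-1`), is a
nonnegative supermartingale started at `s` and equal to `1` from that time on, so `c ≤ s`.
A positive mean makes `F s < s` just below `1`; hence `c < 1`, and `c ≤ F c`, since otherwise
every `s` between `F c` and `c` would satisfy `F s ≤ s`. The tilted mean is
`c⁻¹ (∑ n p n cⁿ - F c)`, and summing the convexity inequality `(1 - c) n cⁿ ≤ c (1 - cⁿ)`, strict
for `n ≥ 2`, against `p` (which charges some `n ≥ 2`, the mean being positive) gives
`(1 - c) ∑ n p n cⁿ < c (1 - F c) ≤ (1 - c) F c`.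
-/

open MeasureTheory ProbabilityTheory Finset Filter Topology
open scoped ENNReal

section Elementary

variable {c : ℝ}

lemma one_sub_mul_nat_mul_pow_le (hc : 0 ≤ c) (n : ℕ) :
    (1 - c) * (n * c ^ n) ≤ c * (1 - c ^ n) := by
  induction n with
  | zero => simp
  | succ n ih =>
    have hstep : 0 ≤ n * (1 - c) ^ 2 * c ^ n := by positivity
    push_cast
    linear_combination ih + hstep

lemma one_sub_mul_nat_mul_pow_lt (hc0 : 0 < c) (hc1 : c ≠ 1) {n : ℕ} (hn : 2 ≤ n) :
    (1 - c) * (n * c ^ n) < c * (1 - c ^ n) := by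
  induction n, hn using Nat.le_induction with
  | base =>
    have : 0 < c * (1 - c) ^ 2 := by
      have := sub_ne_zero.2 hc1.symm
      positivity
    push_cast
    linear_combination this
  | succ n _ ih =>
    have hstep : 0 ≤ n * (1 - c) ^ 2 * c ^ n := by positivity
    push_cast
    linear_combination ih + hstep

end Elementary

noncomputable def pgf (p : ℕ → ℝ) (s : ℝ) : ℝ := ∑' n, p n * s ^ n

section GeneratingFunction

variable {p : ℕ → ℝ} {s c : ℝ}

lemma summable_mul_pow (hp0 : ∀ n, 0 ≤ p n) (hp : Summable p) (hs0 : 0 ≤ s) (hs1 : s ≤ 1) :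
    Summable fun n => p n * s ^ n :=
  hp.of_nonneg_of_le (fun n => mul_nonneg (hp0 n) (pow_nonneg hs0 n))
    fun n => mul_le_of_le_one_right (hp0 n) (pow_le_one₀ hs0 hs1)

lemma summable_nat_mul_mul_pow (hp0 : ∀ n, 0 ≤ p n) (hp1 : HasSum p 1) (hc0 : 0 ≤ c)
    (hc1 : c < 1) : Summable fun n => n * p n * c ^ n := by
  have hgeom : Summable fun n : ℕ => (n : ℝ) ^ 1 * c ^ n :=
    summable_pow_mul_geometric_of_norm_lt_one 1 (by rwa [Real.norm_of_nonneg hc0])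
  refine hgeom.of_nonneg_of_le (fun n => mul_nonneg (mul_nonneg n.cast_nonneg (hp0 n))
    (pow_nonneg hc0 n)) fun n => ?_
  have hp_le : p n ≤ 1 := le_hasSum hp1 n fun m _ => hp0 m
  rw [pow_one]
  gcongr
  exact mul_le_of_le_one_right n.cast_nonneg hp_le

lemma pgf_mono (hp0 : ∀ n, 0 ≤ p n) (hp : Summable p) {t : ℝ} (hs0 : 0 ≤ s) (hst : s ≤ t)
    (ht1 : t ≤ 1) : pgf p s ≤ pgf p t :=
  (summable_mul_pow hp0 hp hs0 (hst.trans ht1)).tsum_le_tsum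
    (fun n => mul_le_mul_of_nonneg_left (pow_le_pow_left₀ hs0 hst n) (hp0 n))
    (summable_mul_pow hp0 hp (hs0.trans hst) ht1)

lemma mul_one_sub_pgf (hp0 : ∀ n, 0 ≤ p n) (hp1 : HasSum p 1) (hs0 : 0 ≤ s) (hs1 : s ≤ 1) :
    HasSum (fun n => p n * (s * (1 - s ^ n))) (s * (1 - pgf p s)) := by
  have h := (hp1.sub (summable_mul_pow hp0 hp1.summable hs0 hs1).hasSum).mul_left s
  rw [show (fun n => p n * (s * (1 - s ^ n))) = fun n => s * (p n - p n * s ^ n) from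
    funext fun n => by ring]
  exact h

lemma exists_pgf_le_self (hp0 : ∀ n, 0 ≤ p n) (hp1 : HasSum p 1) {N : ℕ}
    (hN : 1 < ∑ n ∈ range N, n * p n) : ∃ s, 0 < s ∧ s < 1 ∧ pgf p s ≤ s := by
  set A := ∑ n ∈ range N, n * p n
  have hlim : Tendsto (fun s : ℝ => s ^ N * A) (𝓝[<] 1) (𝓝 A) :=
    (continuous_id.pow N |>.mul continuous_const).tendsto' 1 A (by simp [A]) |>.mono_left
      nhdsWithin_le_nhds
  obtain ⟨s, hsA, hs0, hs1⟩ := ((hlim.eventually (eventually_gt_nhds hN)).and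
    ((Ioo_mem_nhdsLT (zero_lt_one' ℝ)))).exists
  refine ⟨s, hs0, hs1, ?_⟩
  have hterm : ∀ n ∈ range N, (1 - s) * s ^ N * (n * p n) ≤ p n * (s * (1 - s ^ n)) := by
    intro n hn
    have hsn : s ^ N ≤ s ^ n :=
      pow_le_pow_of_le_one hs0.le hs1.le (mem_range.1 hn).le
    calc (1 - s) * s ^ N * (n * p n) ≤ p n * ((1 - s) * (n * s ^ n)) := by
          have := mul_le_mul_of_nonneg_left hsn
            (mul_nonneg (mul_nonneg (sub_nonneg.2 hs1.le) n.cast_nonneg) (hp0 n))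
          linarith
      _ ≤ p n * (s * (1 - s ^ n)) :=
          mul_le_mul_of_nonneg_left (one_sub_mul_nat_mul_pow_le hs0.le n) (hp0 n)
  have hbound : (1 - s) * s ^ N * A ≤ s * (1 - pgf p s) := by
    rw [mul_sum]
    refine (sum_le_sum hterm).trans (sum_le_hasSum _ (fun n _ => ?_)
      (mul_one_sub_pgf hp0 hp1 hs0.le hs1.le))
    exact mul_nonneg (hp0 n) (mul_nonneg hs0.le (sub_nonneg.2 (pow_le_one₀ hs0.le hs1.le)))
  nlinarith

lemma exists_two_le_pos (hp0 : ∀ n, 0 ≤ p n) (hp1 : HasSum p 1) {N : ℕ}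
    (hN : 1 < ∑ n ∈ range N, n * p n) : ∃ j, 2 ≤ j ∧ 0 < p j := by
  by_contra! h
  have hterm : ∀ n ∈ range N, n * p n ≤ p n := by
    intro n _
    rcases lt_or_ge n 2 with hn | hn
    · interval_cases n <;> simp [hp0 0]
    · simp [le_antisymm (h n hn) (hp0 n)]
  linarith [sum_le_sum hterm, sum_le_hasSum (range N) (fun n _ => hp0 n) hp1]

lemma le_pgf_of_forall_pgf_le_self (hp0 : ∀ n, 0 ≤ p n) (hp : Summable p) (hc0 : 0 < c)
    (hc1 : c < 1) (h : ∀ s, 0 < s → s < 1 → pgf p s ≤ s → c ≤ s) : c ≤ pgf p c := by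
  by_contra! hlt
  have hF0 : 0 ≤ pgf p c :=
    tsum_nonneg fun n => mul_nonneg (hp0 n) (pow_nonneg hc0.le n)
  set s := (pgf p c + c) / 2 with hs_def
  have hs : pgf p s ≤ s :=
    (pgf_mono (t := c) hp0 hp (by positivity) (by linarith) hc1.le).trans (by linarith)
  linarith [h s (by positivity) (by linarith) hs]

lemma tsum_nat_mul_mul_pow_lt_pgf (hp0 : ∀ n, 0 ≤ p n) (hp1 : HasSum p 1) (hc0 : 0 < c)
    (hc1 : c < 1) (hcF : c ≤ pgf p c) {j : ℕ} (hj : 2 ≤ j) (hpj : 0 < p j) :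
    ∑' n, n * p n * c ^ n < pgf p c := by
  have hlt : (1 - c) * ∑' n, n * p n * c ^ n < c * (1 - pgf p c) := by
    rw [← tsum_mul_left, ← (mul_one_sub_pgf hp0 hp1 hc0.le hc1.le).tsum_eq]
    refine Summable.tsum_lt_tsum (i := j) (fun n => ?_) ?_
      ((summable_nat_mul_mul_pow hp0 hp1 hc0.le hc1).mul_left _)
      (mul_one_sub_pgf hp0 hp1 hc0.le hc1.le).summable
    · have := mul_le_mul_of_nonneg_left (one_sub_mul_nat_mul_pow_le hc0.le n) (hp0 n)
      linarith
    · have := mul_lt_mul_of_pos_left (one_sub_mul_nat_mul_pow_lt hc0 hc1.ne hj) hpj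
      linarith
  nlinarith

theorem tsum_sub_one_mul_mul_zpow_neg (hp0 : ∀ n, 0 ≤ p n) (hp1 : HasSum p 1) (hc0 : 0 < c)
    (hc1 : c < 1) (hcF : c ≤ pgf p c) {j : ℕ} (hj : 2 ≤ j) (hpj : 0 < p j) :
    (Summable fun n : ℕ => |((n : ℝ) - 1) * p n * c ^ ((n : ℤ) - 1)|) ∧
      ∑' n : ℕ, ((n : ℝ) - 1) * p n * c ^ ((n : ℤ) - 1) < 0 := by
  have hzpow : ∀ n : ℕ, ((n : ℝ) - 1) * p n * c ^ ((n : ℤ) - 1)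
      = (n * p n * c ^ n - p n * c ^ n) * c⁻¹ := by
    intro n
    rw [zpow_sub₀ hc0.ne', zpow_natCast, zpow_one, div_eq_mul_inv]
    ring
  have hsum := (summable_nat_mul_mul_pow hp0 hp1 hc0.le hc1).sub
    (summable_mul_pow hp0 hp1.summable hc0.le hc1.le)
  simp only [hzpow]
  refine ⟨(hsum.mul_right _).abs, ?_⟩
  rw [tsum_mul_right, (summable_nat_mul_mul_pow hp0 hp1 hc0.le hc1).tsum_sub
    (summable_mul_pow hp0 hp1.summable hc0.le hc1.le)]
  exact mul_neg_of_neg_of_pos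
    (sub_neg.2 (tsum_nat_mul_mul_pow_lt_pgf hp0 hp1 hc0 hc1 hcF hj hpj)) (inv_pos.2 hc0)

end GeneratingFunction

section StoppedWalk

variable {Ω : Type*} {X : ℕ → Ω → ℤ}

def stoppedWalk (X : ℕ → Ω → ℤ) : ℕ → Ω → ℤ
  | 0, _ => 0
  | n + 1, ω => if stoppedWalk X n ω < 0 then stoppedWalk X n ω else stoppedWalk X n ω + X n ω

lemma stoppedWalk_neg_or_eq_sum (n : ℕ) (ω : Ω) :
    stoppedWalk X n ω < 0 ∨ stoppedWalk X n ω = ∑ l ∈ range n, X l ω := by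
  induction n with
  | zero => simp [stoppedWalk]
  | succ n ih =>
    by_cases h : stoppedWalk X n ω < 0
    · simp [stoppedWalk, h]
    · right
      rw [stoppedWalk, if_neg h, sum_range_succ, ih.resolve_left h]

lemma monotone_setOf_stoppedWalk_neg : Monotone fun n => {ω | stoppedWalk X n ω < 0} :=
  monotone_nat_of_le_succ fun n ω (h : stoppedWalk X n ω < 0) => by
    simp [stoppedWalk, h]

abbrev historyBefore [MeasurableSpace Ω] (X : ℕ → Ω → ℤ) (n : ℕ) : MeasurableSpace Ω :=
  ⨆ i ∈ Set.Iio n, MeasurableSpace.comap (X i) inferInstance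

lemma historyBefore_le {mΩ : MeasurableSpace Ω} (hmeas : ∀ n, Measurable (X n)) (n : ℕ) :
    historyBefore X n ≤ mΩ :=
  iSup₂_le fun i _ => (hmeas i).comap_le

lemma measurable_stoppedWalk [MeasurableSpace Ω] (n : ℕ) :
    Measurable[historyBefore X n] (stoppedWalk X n) := by
  induction n with
  | zero => exact measurable_const
  | succ n ih =>
    have hT : Measurable[historyBefore X (n + 1)] (stoppedWalk X n) :=
      ih.mono (biSup_mono fun i (hi : i < n) => show i < n + 1 by omega) le_rfl
    have hXn : Measurable[historyBefore X (n + 1)] (X n) :=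
      (comap_measurable (X n)).mono (le_biSup (fun i => MeasurableSpace.comap (X i) _)
        (show n < n + 1 by omega)) le_rfl
    exact (measurable_of_countable fun t : ℤ × ℤ => if t.1 < 0 then t.1 else t.1 + t.2).comp
      (hT.prodMk hXn)

end StoppedWalk

section Supermartingale

variable {Ω : Type*} {mΩ : MeasurableSpace Ω} {μ : Measure Ω} {X : ℕ → Ω → ℤ} {r : ℝ≥0∞}

lemma pow_stoppedWalk_succ_mul (r : ℝ≥0∞) {n : ℕ} {ω : Ω} (hω : -1 ≤ X n ω) :
    r ^ (stoppedWalk X (n + 1) ω + 1).toNat * r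
      = (if stoppedWalk X n ω < 0 then 1 else 0) * r
        + (if stoppedWalk X n ω < 0 then 0 else r ^ (stoppedWalk X n ω + 1).toNat)
          * r ^ (X n ω + 1).toNat := by
  by_cases h : stoppedWalk X n ω < 0
  · simp [stoppedWalk, h, show (stoppedWalk X n ω + 1).toNat = 0 by omega]
  · simp only [stoppedWalk, h, if_false, zero_mul, zero_add, ← pow_succ, ← pow_add]
    congr 1
    omega

lemma lintegral_pow_stoppedWalk_succ_le (hmeas : ∀ n, Measurable (X n))
    (hindep : iIndepFun X μ) {n : ℕ} (hskip : ∀ᵐ ω ∂μ, -1 ≤ X n ω) (hr0 : r ≠ 0) (hr : r ≠ ⊤)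
    (hmoment : ∫⁻ ω, r ^ (X n ω + 1).toNat ∂μ ≤ r) :
    ∫⁻ ω, r ^ (stoppedWalk X (n + 1) ω + 1).toNat ∂μ
      ≤ ∫⁻ ω, r ^ (stoppedWalk X n ω + 1).toNat ∂μ := by
  have h𝓕 := historyBefore_le hmeas n
  have hindep𝓕 : Indep (historyBefore X n) (MeasurableSpace.comap (X n) inferInstance) μ := by
    simpa [historyBefore] using indep_iSup_of_disjoint (fun i => (hmeas i).comap_le) hindep.iIndep
      (S := Set.Iio n) (T := {n}) (by simp)
  set stopped : Ω → ℝ≥0∞ := fun ω => if stoppedWalk X n ω < 0 then 1 else 0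
  set running : Ω → ℝ≥0∞ := fun ω =>
    if stoppedWalk X n ω < 0 then 0 else r ^ (stoppedWalk X n ω + 1).toNat
  have hrunning : Measurable[historyBefore X n] running :=
    (measurable_of_countable fun k : ℤ => if k < 0 then 0 else r ^ (k + 1).toNat).comp
      (measurable_stoppedWalk n)
  have hstopped : Measurable stopped :=
    ((measurable_of_countable fun k : ℤ => if k < 0 then (1 : ℝ≥0∞) else 0).comp
      (measurable_stoppedWalk n)).mono h𝓕 le_rfl
  have hsplit : ∀ ω, r ^ (stoppedWalk X n ω + 1).toNat = stopped ω + running ω := by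
    intro ω
    by_cases h : stoppedWalk X n ω < 0
    · simp [stopped, running, h, show (stoppedWalk X n ω + 1).toNat = 0 by omega]
    · simp [stopped, running, h]
  have hstep : ∀ᵐ ω ∂μ, r ^ (stoppedWalk X (n + 1) ω + 1).toNat * r
      = stopped ω * r + running ω * r ^ (X n ω + 1).toNat := by
    filter_upwards [hskip] with ω hω
    exact pow_stoppedWalk_succ_mul r hω
  rw [← ENNReal.mul_le_mul_iff_left hr0 hr]
  calc (∫⁻ ω, r ^ (stoppedWalk X (n + 1) ω + 1).toNat ∂μ) * r
      = ∫⁻ ω, (stopped ω * r + running ω * r ^ (X n ω + 1).toNat) ∂μ := by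
        rw [← lintegral_mul_const' _ _ hr, lintegral_congr_ae hstep]
    _ = (∫⁻ ω, stopped ω ∂μ) * r + (∫⁻ ω, running ω ∂μ) * ∫⁻ ω, r ^ (X n ω + 1).toNat ∂μ := by
        rw [lintegral_add_left (hstopped.mul_const r), lintegral_mul_const r hstopped]
        congr 1
        exact lintegral_mul_eq_lintegral_mul_lintegral_of_independent_measurableSpace h𝓕
          (hmeas n).comap_le hindep𝓕 hrunning
          ((measurable_of_countable fun k : ℤ => r ^ (k + 1).toNat).comp (comap_measurable (X n)))
    _ ≤ (∫⁻ ω, stopped ω ∂μ) * r + (∫⁻ ω, running ω ∂μ) * r := by gcongr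
    _ = (∫⁻ ω, r ^ (stoppedWalk X n ω + 1).toNat ∂μ) * r := by
        rw [← add_mul, ← lintegral_add_left hstopped]
        simp only [hsplit]

theorem measure_exists_sum_eq_neg_one_le [IsProbabilityMeasure μ] (hmeas : ∀ n, Measurable (X n))
    (hindep : iIndepFun X μ) (hident : ∀ n, IdentDistrib (X n) (X 0) μ μ)
    (hskip : ∀ᵐ ω ∂μ, -1 ≤ X 0 ω) (hr0 : r ≠ 0) (hr : r ≠ ⊤)
    (hmoment : ∫⁻ ω, r ^ (X 0 ω + 1).toNat ∂μ ≤ r) :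
    μ {ω | ∃ m : ℕ, ∑ l ∈ range m, X l ω = -1} ≤ r := by
  have hbound : ∀ n, ∫⁻ ω, r ^ (stoppedWalk X n ω + 1).toNat ∂μ ≤ r := by
    intro n
    induction n with
    | zero => simp [stoppedWalk]
    | succ n ih =>
      have hskip_n : ∀ᵐ ω ∂μ, -1 ≤ X n ω :=
        (hident n).symm.ae_snd (p := fun k => -1 ≤ k) (Set.to_countable _).measurableSet hskip
      have hmoment_n : ∫⁻ ω, r ^ (X n ω + 1).toNat ∂μ ≤ r :=
        ((hident n).comp (measurable_of_countable fun k : ℤ => r ^ (k + 1).toNat)).lintegral_eq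
          ▸ hmoment
      exact (lintegral_pow_stoppedWalk_succ_le hmeas hindep hskip_n hr0 hr hmoment_n).trans ih
  have hstopped : ∀ n, μ {ω | stoppedWalk X n ω < 0} ≤ r := by
    intro n
    have hW : Measurable fun ω => r ^ (stoppedWalk X n ω + 1).toNat :=
      (measurable_of_countable fun k : ℤ => r ^ (k + 1).toNat).comp
        ((measurable_stoppedWalk n).mono (historyBefore_le hmeas n) le_rfl)
    calc μ {ω | stoppedWalk X n ω < 0}
        ≤ μ {ω | 1 ≤ r ^ (stoppedWalk X n ω + 1).toNat} :=
          measure_mono fun ω (h : stoppedWalk X n ω < 0) => by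
            simp [show (stoppedWalk X n ω + 1).toNat = 0 by omega]
      _ ≤ ∫⁻ ω, r ^ (stoppedWalk X n ω + 1).toNat ∂μ := by
          simpa using mul_meas_ge_le_lintegral₀ hW.aemeasurable 1
      _ ≤ r := hbound n
  calc μ {ω | ∃ m : ℕ, ∑ l ∈ range m, X l ω = -1}
      ≤ μ (⋃ n, {ω | stoppedWalk X n ω < 0}) := by
        refine measure_mono fun ω ⟨m, hm⟩ => Set.mem_iUnion.2 ⟨m, ?_⟩
        rcases stoppedWalk_neg_or_eq_sum (X := X) m ω with h | h
        · exact h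
        · show stoppedWalk X m ω < 0
          omega
    _ = ⨆ n, μ {ω | stoppedWalk X n ω < 0} := monotone_setOf_stoppedWalk_neg.measure_iUnion
    _ ≤ r := iSup_le hstopped

end Supermartingale

section Law

variable {Ω : Type*} [MeasurableSpace Ω] {μ : Measure Ω}

lemma one_lt_lintegral_ofReal_add_one [IsProbabilityMeasure μ] {Z : Ω → ℝ}
    (hZ : AEStronglyMeasurable Z μ) (h : ∀ᵐ ω ∂μ, -1 ≤ Z ω)
    (hmean : ¬ Integrable Z μ ∨ 0 < ∫ ω, Z ω ∂μ) :
    1 < ∫⁻ ω, ENNReal.ofReal (Z ω + 1) ∂μ := by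
  by_contra! hle
  have hnonneg : 0 ≤ᵐ[μ] fun ω => Z ω + 1 :=
    h.mono fun ω hω => by simp only [Pi.zero_apply]; linarith
  have hint : Integrable (fun ω => Z ω + 1) μ :=
    ⟨hZ.add aestronglyMeasurable_const,
      (hasFiniteIntegral_iff_ofReal hnonneg).2 (hle.trans_lt ENNReal.one_lt_top)⟩
  have hZint : Integrable Z μ :=
    (hint.sub (integrable_const 1)).congr (Eventually.of_forall fun ω => by simp)
  have hval : ∫ ω, (Z ω + 1) ∂μ ≤ 1 := by
    rw [integral_eq_lintegral_of_nonneg_ae hnonneg hint.aestronglyMeasurable]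
    exact ENNReal.toReal_le_of_le_ofReal zero_le_one (by simpa using hle)
  rw [integral_add hZint (integrable_const 1)] at hval
  simp only [integral_const, probReal_univ, smul_eq_mul, one_mul] at hval
  rcases hmean with hni | hpos
  · exact hni hZint
  · linarith

variable {Y : Ω → ℤ}

lemma lintegral_comp_eq_tsum (hY : Measurable Y) (h : ∀ᵐ ω ∂μ, -1 ≤ Y ω) (f : ℤ → ℝ≥0∞) :
    ∫⁻ ω, f (Y ω) ∂μ = ∑' n : ℕ, f (n - 1) * μ {ω | Y ω = n - 1} := by
  rw [← lintegral_map (measurable_of_countable f) hY, lintegral_countable']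
  refine (Function.Injective.tsum_eq (g := fun n : ℕ => (n : ℤ) - 1)
    (fun a b hab => by simpa using hab) fun k hk => ?_).symm.trans ?_
  · by_contra hrange
    have hk' : k < -1 := by
      by_contra! hk1
      exact hrange ⟨(k + 1).toNat, by simp only; omega⟩
    refine hk (mul_eq_zero_of_right _ ?_)
    rw [Measure.map_apply hY (measurableSet_singleton k)]
    exact measure_mono_null (fun ω (hω : Y ω = k) => show ¬ -1 ≤ Y ω by omega) (ae_iff.1 h)
  · simp only [Measure.map_apply hY (measurableSet_singleton _)]
    rfl

lemma hasSum_measure_eq_sub_one [IsProbabilityMeasure μ] (hY : Measurable Y)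
    (h : ∀ᵐ ω ∂μ, -1 ≤ Y ω) : HasSum (fun n : ℕ => (μ {ω | Y ω = n - 1}).toReal) 1 := by
  have htot : ∑' n : ℕ, μ {ω | Y ω = n - 1} = 1 := by
    simpa using (lintegral_comp_eq_tsum hY h fun _ => 1).symm
  have := (ENNReal.summable_toReal (htot ▸ ENNReal.one_ne_top)).hasSum
  rwa [← ENNReal.tsum_toReal_eq fun n => measure_ne_top μ _, htot, ENNReal.toReal_one] at this

lemma lintegral_ofReal_pow_eq_ofReal_pgf [IsProbabilityMeasure μ] (hY : Measurable Y)
    (h : ∀ᵐ ω ∂μ, -1 ≤ Y ω) {s : ℝ} (hs0 : 0 ≤ s) (hs1 : s ≤ 1) :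
    ∫⁻ ω, ENNReal.ofReal s ^ (Y ω + 1).toNat ∂μ
      = ENNReal.ofReal (pgf (fun n : ℕ => (μ {ω | Y ω = n - 1}).toReal) s) := by
  rw [lintegral_comp_eq_tsum hY h fun k => ENNReal.ofReal s ^ (k + 1).toNat, pgf,
    ENNReal.ofReal_tsum_of_nonneg (fun n => mul_nonneg ENNReal.toReal_nonneg (pow_nonneg hs0 n))
    (summable_mul_pow (fun n => ENNReal.toReal_nonneg) (hasSum_measure_eq_sub_one hY h).summable
      hs0 hs1)]
  refine tsum_congr fun n => ?_
  rw [ENNReal.ofReal_mul ENNReal.toReal_nonneg, ENNReal.ofReal_toReal (measure_ne_top μ _),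
    ENNReal.ofReal_pow hs0, mul_comm, show ((n : ℤ) - 1 + 1).toNat = n by omega]

lemma exists_one_lt_sum_nat_mul [IsProbabilityMeasure μ] (hY : Measurable Y)
    (h : ∀ᵐ ω ∂μ, -1 ≤ Y ω)
    (hmean : ¬ Integrable (fun ω => (Y ω : ℝ)) μ ∨ 0 < ∫ ω, (Y ω : ℝ) ∂μ) :
    ∃ N, 1 < ∑ n ∈ range N, n * (μ {ω | Y ω = n - 1}).toReal := by
  have hlt := one_lt_lintegral_ofReal_add_one (Z := fun ω => (Y ω : ℝ))
    ((measurable_of_countable fun k : ℤ => (k : ℝ)).comp hY).aestronglyMeasurable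
    (h.mono fun ω hω => by exact_mod_cast hω) hmean
  rw [lintegral_comp_eq_tsum hY h fun k => ENNReal.ofReal (k + 1), ENNReal.tsum_eq_iSup_nat,
    lt_iSup_iff] at hlt
  obtain ⟨N, hN⟩ := hlt
  refine ⟨N, ENNReal.one_lt_ofReal.1 (hN.trans_eq ?_)⟩
  rw [ENNReal.ofReal_sum_of_nonneg fun n _ => mul_nonneg n.cast_nonneg ENNReal.toReal_nonneg]
  refine sum_congr rfl fun n _ => ?_
  rw [ENNReal.ofReal_mul n.cast_nonneg, ENNReal.ofReal_toReal (measure_ne_top μ _)]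
  push_cast
  ring_nf

end Law

lemma toReal_measure_exists_sum_eq_neg_one_le {Ω : Type*} [MeasurableSpace Ω] {μ : Measure Ω}
    [IsProbabilityMeasure μ] {X : ℕ → Ω → ℤ} (hmeas : ∀ n, Measurable (X n))
    (hindep : iIndepFun X μ) (hident : ∀ n, IdentDistrib (X n) (X 0) μ μ)
    (hskip : ∀ᵐ ω ∂μ, -1 ≤ X 0 ω) {s : ℝ} (hs0 : 0 < s) (hs1 : s ≤ 1)
    (hs : pgf (fun n : ℕ => (μ {ω | X 0 ω = n - 1}).toReal) s ≤ s) :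
    (μ {ω | ∃ m : ℕ, ∑ l ∈ range m, X l ω = -1}).toReal ≤ s := by
  refine ENNReal.toReal_le_of_le_ofReal hs0.le (measure_exists_sum_eq_neg_one_le hmeas hindep
    hident hskip (ENNReal.ofReal_pos.2 hs0).ne' ENNReal.ofReal_ne_top ?_)
  rw [lintegral_ofReal_pow_eq_ofReal_pgf (hmeas 0) hskip hs0.le hs1]
  exact ENNReal.ofReal_le_ofReal hs

theorem doob_transform_neg_mean_general {Ω : Type*} [MeasurableSpace Ω] (μ : Measure Ω)
    [IsProbabilityMeasure μ] (X : ℕ → Ω → ℤ)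
    (hmeas : ∀ n, Measurable (X n))
    (hindep : iIndepFun X μ)
    (hident : ∀ n, IdentDistrib (X n) (X 0) μ μ)
    (hskip : ∀ᵐ ω ∂μ, -1 ≤ X 0 ω)
    (hminus : 0 < μ {ω | X 0 ω = -1})
    (hmean : ¬ Integrable (fun ω => (X 0 ω : ℝ)) μ ∨ 0 < ∫ ω, (X 0 ω : ℝ) ∂μ) :
    (Summable fun n : ℕ =>
        |((n : ℝ) - 1) * (μ {ω | X 0 ω = (n : ℤ) - 1}).toReal *
          (μ {ω | ∃ m : ℕ, ∑ l ∈ Finset.range m, X l ω = -1}).toReal ^ ((n : ℤ) - 1)|) ∧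
      (∑' n : ℕ,
          ((n : ℝ) - 1) * (μ {ω | X 0 ω = (n : ℤ) - 1}).toReal *
            (μ {ω | ∃ m : ℕ, ∑ l ∈ Finset.range m, X l ω = -1}).toReal ^ ((n : ℤ) - 1))
        < 0 := by
  set p : ℕ → ℝ := fun n => (μ {ω | X 0 ω = n - 1}).toReal
  set c := (μ {ω | ∃ m : ℕ, ∑ l ∈ range m, X l ω = -1}).toReal
  have hp0 : ∀ n, 0 ≤ p n := fun n => ENNReal.toReal_nonneg
  have hp1 : HasSum p 1 := hasSum_measure_eq_sub_one (hmeas 0) hskip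
  have hhit : ∀ s, 0 < s → s < 1 → pgf p s ≤ s → c ≤ s := fun s hs0 hs1 =>
    toReal_measure_exists_sum_eq_neg_one_le hmeas hindep hident hskip hs0 hs1.le
  obtain ⟨N, hN⟩ := exists_one_lt_sum_nat_mul (hmeas 0) hskip hmean
  obtain ⟨s, hs0, hs1, hs⟩ := exists_pgf_le_self hp0 hp1 hN
  have hc1 : c < 1 := (hhit s hs0 hs1 hs).trans_lt hs1
  have hsub : {ω | X 0 ω = -1} ⊆ {ω | ∃ m : ℕ, ∑ l ∈ range m, X l ω = -1} :=
    fun ω hω => ⟨1, by simpa using hω⟩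
  have hc0 : 0 < c :=
    ENNReal.toReal_pos (hminus.trans_le (measure_mono hsub)).ne' (measure_ne_top μ _)
  obtain ⟨j, hj, hpj⟩ := exists_two_le_pos hp0 hp1 hN
  exact tsum_sub_one_mul_mul_zpow_neg hp0 hp1 hc0 hc1
    (le_pgf_of_forall_pgf_le_self hp0 hp1.summable hc0 hc1 hhit) hj hpj

/-- For a skip-free to the left random walk with `ℙ[X_0 = -1] > 0` whose mean exists and
lies in `(0, ∞]`, the Doob `h`-transformed increment distribution `k ↦ ℙ[X_0 = k] c^k`
(for `k ≥ -1`, reindexed by `k = n - 1`, `n : ℕ`) has strictly negative mean: the series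
`∑_{k=-1}^∞ k ℙ[X_0 = k] c^k` converges absolutely and its sum is `< 0`, where
`c = ℙ[∃ n, S_n = -1]`. -/
theorem doob_transform_neg_mean {Ω : Type*} [MeasurableSpace Ω] (μ : Measure Ω)
    [IsProbabilityMeasure μ] (X : ℕ → Ω → ℤ)
    (hmeas : ∀ n, Measurable (X n))
    (hindep : iIndepFun X μ)
    (hident : ∀ n, IdentDistrib (X n) (X 0) μ μ)
    (hskip : ∀ᵐ ω ∂μ, -1 ≤ X 0 ω)
    (hminus : 0 < μ {ω | X 0 ω = -1})
    (hnegpart : Integrable (fun ω => max (-(X 0 ω : ℝ)) 0) μ)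
    (hmean : ¬ Integrable (fun ω => (X 0 ω : ℝ)) μ ∨ 0 < ∫ ω, (X 0 ω : ℝ) ∂μ) :
    (Summable fun n : ℕ =>
        |((n : ℝ) - 1) * (μ {ω | X 0 ω = (n : ℤ) - 1}).toReal *
          (μ {ω | ∃ m : ℕ, ∑ l ∈ Finset.range m, X l ω = -1}).toReal ^ ((n : ℤ) - 1)|) ∧
      (∑' n : ℕ,
          ((n : ℝ) - 1) * (μ {ω | X 0 ω = (n : ℤ) - 1}).toReal *
            (μ {ω | ∃ m : ℕ, ∑ l ∈ Finset.range m, X l ω = -1}).toReal ^ ((n : ℤ) - 1))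
        < 0 :=
  doob_transform_neg_mean_general μ X hmeas hindep hident hskip hminus hmean
end

section
/- Let (X_n)_{n ≥ 0} be an i.i.d. sequence of integer-valued random variables with ℙ[X_0 ≥ -1] = 1, integrable and with E[X_0] < 0. Let τ = inf{n > 0 : S_n ≥ 0} be the weak upper record epoch of the associated skip-free to the left random walk. Then for every integer k ≥ 0, ℙ[τ < ∞, X_{τ-1} = k] = (k+1) · ℙ[X_0 = k]. -/
/-!
Split according to the record epoch `τ = N + 1`. The event `{τ = N + 1, X_N = k}` is the
intersection of `{S_1, …, S_N < 0, S_N ≥ -k}`, which only depends on `X_0, …, X_{N-1}`, with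
`{X_N = k}`, so its probability is `ℙ[S_1, …, S_N < 0, S_N ≥ -k] ℙ[X_0 = k]`. Split further
according to the value `S_N = -j`, `0 ≤ j ≤ k`. Reversing the order of `X_0, …, X_{N-1}` does not
change their joint law and turns `{S_1, …, S_N < 0, S_N = -j}` into the event that the walk first
hits `-j` at time `N`. By the strong law the walk drifts to `-∞`, and since it cannot jump over a
level downwards it hits `-j` almost surely, so for each `j` these probabilities sum to `1` over `N`.
-/

open MeasureTheory ProbabilityTheory Filter Finset Function
open scoped ENNReal

section IID

variable {Ω ι κ β : Type*} [MeasurableSpace Ω] [MeasurableSpace β] {μ : Measure Ω}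
  {X : ι → Ω → β}

lemma map_comp_eq_infinitePi_of_injective (hmeas : ∀ i, Measurable (X i))
    (hindep : iIndepFun X μ) {i₀ : ι} (hident : ∀ i, IdentDistrib (X i) (X i₀) μ μ)
    {g : κ → ι} (hg : g.Injective) :
    μ.map (fun ω k ↦ X (g k) ω) = Measure.infinitePi (fun _ ↦ μ.map (X i₀)) := by
  rw [(hindep.precomp hg).map_fun_eq_infinitePi_map fun k ↦ hmeas (g k)]
  simp only [(hident _).map_eq]

lemma identDistrib_comp_of_injective (hmeas : ∀ i, Measurable (X i))
    (hindep : iIndepFun X μ) {i₀ : ι} (hident : ∀ i, IdentDistrib (X i) (X i₀) μ μ)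
    {g h : κ → ι} (hg : g.Injective) (hh : h.Injective) :
    IdentDistrib (fun ω k ↦ X (g k) ω) (fun ω k ↦ X (h k) ω) μ μ where
  aemeasurable_fst := (measurable_pi_lambda _ fun k ↦ hmeas (g k)).aemeasurable
  aemeasurable_snd := (measurable_pi_lambda _ fun k ↦ hmeas (h k)).aemeasurable
  map_eq := by
    rw [map_comp_eq_infinitePi_of_injective hmeas hindep hident hg,
      map_comp_eq_infinitePi_of_injective hmeas hindep hident hh]

lemma measure_inter_preimage_eq_mul_of_measurableSet_iSup (hmeas : ∀ i, Measurable (X i))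
    (hindep : iIndepFun X μ) {s : Set ι} {i : ι} (hi : i ∉ s) {A : Set Ω}
    (hA : MeasurableSet[⨆ j ∈ s, MeasurableSpace.comap (X j) inferInstance] A) {B : Set β}
    (hB : MeasurableSet B) :
    μ (A ∩ X i ⁻¹' B) = μ A * μ (X i ⁻¹' B) := by
  have hindep' := indep_iSup_of_disjoint (fun j ↦ (hmeas j).comap_le) hindep
    (Set.disjoint_singleton_right.2 hi)
  rw [_root_.iSup_singleton] at hindep'
  exact (Indep_iff _ _ μ).1 hindep' A _ hA ⟨B, hB, rfl⟩

end IID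

section Walk

def negativeUpTo (N : ℕ) : Set (ℕ → ℤ) :=
  {x | ∀ i, 0 < i → i ≤ N → ∑ l ∈ range i, x l < 0}

def hitsFirstAt (j N : ℕ) : Set (ℕ → ℤ) :=
  {x | ∑ l ∈ range N, x l = -j ∧ ∀ i < N, -(j : ℤ) < ∑ l ∈ range i, x l}

/-- The event `τ = N + 1`. -/
def firstRecordAt (N : ℕ) : Set (ℕ → ℤ) :=
  negativeUpTo N ∩ {x | 0 ≤ ∑ l ∈ range (N + 1), x l}

def reflectBelow (N l : ℕ) : ℕ := if l < N then N - 1 - l else l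

lemma reflectBelow_injective (N : ℕ) : (reflectBelow N).Injective := by
  intro a b hab
  unfold reflectBelow at hab
  split_ifs at hab <;> omega

lemma sum_range_comp_reflectBelow {G : Type*} [AddCommGroup G] (x : ℕ → G) {i N : ℕ}
    (hi : i ≤ N) :
    ∑ l ∈ range i, x (reflectBelow N l) = ∑ l ∈ range N, x l - ∑ l ∈ range (N - i), x l := by
  rw [← sum_Ico_eq_sub _ (Nat.sub_le N i)]
  obtain rfl | hN := Nat.eq_zero_or_pos N
  · simp [Nat.le_zero.1 hi]
  have hreflect := sum_Ico_reflect x 0 (m := i) (n := N - 1) (by omega)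
  rw [Nat.sub_add_cancel hN, Nat.sub_zero] at hreflect
  rw [← hreflect, ← range_eq_Ico]
  exact sum_congr rfl fun l hl ↦ by
    rw [reflectBelow, if_pos (by simp at hl; omega)]

lemma comp_reflectBelow_mem_iff (x : ℕ → ℤ) (j N : ℕ) :
    x ∘ reflectBelow N ∈ negativeUpTo N ∩ {y | ∑ l ∈ range N, y l = -j} ↔
      x ∈ hitsFirstAt j N := by
  simp only [negativeUpTo, hitsFirstAt, Set.mem_inter_iff, Set.mem_ofPred_eq,
    Function.comp_apply, sum_range_comp_reflectBelow x le_rfl, Nat.sub_self, range_zero,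
    sum_empty, sub_zero]
  refine and_comm.trans (and_congr_right fun hN ↦ ⟨fun h i hi ↦ ?_, fun h i hi hiN ↦ ?_⟩)
  · have := h (N - i) (by omega) (by omega)
    rw [sum_range_comp_reflectBelow x (by omega), Nat.sub_sub_self hi.le] at this
    omega
  · rw [sum_range_comp_reflectBelow x hiN]
    have := h (N - i) (by omega)
    omega

lemma exists_mem_hitsFirstAt {x : ℕ → ℤ} (hx : ∀ n, -1 ≤ x n) {j : ℕ}
    (h : ∃ n, ∑ l ∈ range n, x l ≤ -j) : ∃ N, x ∈ hitsFirstAt j N := by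
  classical
  refine ⟨Nat.find h, le_antisymm (Nat.find_spec h) ?_, fun i hi ↦ not_le.1 (Nat.find_min h hi)⟩
  cases hN : Nat.find h with
  | zero => simp
  | succ M =>
    have hM : -(j : ℤ) < ∑ l ∈ range M, x l := not_le.1 (Nat.find_min h (by omega))
    rw [sum_range_succ]
    linarith [hx M]

lemma pairwise_disjoint_hitsFirstAt (j : ℕ) : Pairwise (Disjoint on hitsFirstAt j) := by
  refine pairwise_disjoint_on _ |>.2 fun a b hab ↦ Set.disjoint_left.2 ?_
  rintro x ⟨hxa, -⟩ ⟨-, hxb⟩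
  exact (hxb a hab).ne' hxa

lemma pairwise_disjoint_firstRecordAt : Pairwise (Disjoint on firstRecordAt) := by
  refine pairwise_disjoint_on _ |>.2 fun a b hab ↦ Set.disjoint_left.2 ?_
  rintro x ⟨-, hxa⟩ ⟨hxb, -⟩
  exact (hxb (a + 1) a.succ_pos hab).not_ge hxa

lemma exists_firstRecordAt_iff (x : ℕ → ℤ) (k : ℕ) :
    (∃ n, 0 < n ∧ (∀ m, 0 < m → m < n → ∑ l ∈ range m, x l < 0) ∧
        0 ≤ ∑ l ∈ range n, x l ∧ x (n - 1) = k) ↔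
      ∃ N, x ∈ firstRecordAt N ∩ {y | y N = k} := by
  constructor
  · rintro ⟨n, hn, hneg, hrec, hk⟩
    obtain ⟨N, rfl⟩ := Nat.exists_eq_add_one_of_ne_zero hn.ne'
    exact ⟨N, ⟨fun i hi hiN ↦ hneg i hi (by omega), hrec⟩, hk⟩
  · rintro ⟨N, ⟨hneg, hrec⟩, hk⟩
    exact ⟨N + 1, N.succ_pos, fun i hi hiN ↦ hneg i hi (by omega), hrec, hk⟩

lemma firstRecordAt_inter_eq (k N : ℕ) :
    firstRecordAt N ∩ {x | x N = k} =
      negativeUpTo N ∩ {x | -(k : ℤ) ≤ ∑ l ∈ range N, x l} ∩ {x | x N = k} := by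
  ext x
  simp only [firstRecordAt, Set.mem_inter_iff, Set.mem_ofPred_eq, sum_range_succ]
  constructor <;> rintro ⟨⟨hneg, hsum⟩, hk⟩ <;> exact ⟨⟨hneg, by omega⟩, hk⟩

lemma sum_range_nonpos_of_mem_negativeUpTo {x : ℕ → ℤ} {N : ℕ} (hx : x ∈ negativeUpTo N) :
    ∑ l ∈ range N, x l ≤ 0 := by
  obtain rfl | hN := Nat.eq_zero_or_pos N
  · simp
  · exact (hx N hN le_rfl).le

lemma negativeUpTo_inter_eq_biUnion (k N : ℕ) :
    negativeUpTo N ∩ {x | -(k : ℤ) ≤ ∑ l ∈ range N, x l} =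
      ⋃ j ∈ range (k + 1), negativeUpTo N ∩ {x | ∑ l ∈ range N, x l = -j} := by
  ext x
  simp only [Set.mem_inter_iff, Set.mem_ofPred_eq, Set.mem_iUnion, mem_range, exists_prop]
  constructor
  · rintro ⟨hneg, hk⟩
    have := sum_range_nonpos_of_mem_negativeUpTo hneg
    exact ⟨(-∑ l ∈ range N, x l).toNat, by omega, hneg, by omega⟩
  · rintro ⟨j, hj, hneg, hsum⟩
    exact ⟨hneg, by omega⟩

lemma measurable_sum_range (n : ℕ) : Measurable fun x : ℕ → ℤ ↦ ∑ l ∈ range n, x l := by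
  fun_prop

lemma measurableSet_negativeUpTo (N : ℕ) : MeasurableSet (negativeUpTo N) := by
  unfold negativeUpTo
  measurability

lemma measurableSet_hitsFirstAt (j N : ℕ) : MeasurableSet (hitsFirstAt j N) := by
  unfold hitsFirstAt
  measurability

lemma measurableSet_firstRecordAt (N : ℕ) : MeasurableSet (firstRecordAt N) :=
  (measurableSet_negativeUpTo N).inter (measurable_sum_range (N + 1) measurableSet_Ici)

end Walk

section RandomWalk

variable {Ω : Type*} {X : ℕ → Ω → ℤ}

lemma measurable_sum_range_iSup_comap {i N : ℕ} (hi : i ≤ N) :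
    Measurable[⨆ l ∈ Set.Iio N, MeasurableSpace.comap (X l) inferInstance]
      fun ω ↦ ∑ l ∈ range i, X l ω :=
  Finset.measurable_sum _ fun l hl ↦ (comap_measurable (X l)).mono
    (le_iSup₂ (f := fun l (_ : l ∈ Set.Iio N) ↦ MeasurableSpace.comap (X l) inferInstance) l
      (by simp only [mem_range] at hl; exact Set.mem_Iio.2 (by omega))) le_rfl

lemma measurableSet_preimage_negativeUpTo_inter_iSup_comap (k N : ℕ) :
    MeasurableSet[⨆ l ∈ Set.Iio N, MeasurableSpace.comap (X l) inferInstance]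
      ((fun ω n ↦ X n ω) ⁻¹' (negativeUpTo N ∩ {x | -(k : ℤ) ≤ ∑ l ∈ range N, x l})) := by
  have hneg : (fun ω n ↦ X n ω) ⁻¹' negativeUpTo N =
      ⋂ (i) (_ : 0 < i) (_ : i ≤ N), {ω | ∑ l ∈ range i, X l ω < 0} := by
    ext ω
    simp [negativeUpTo]
  rw [Set.preimage_inter, hneg]
  exact .inter (.iInter fun i ↦ .iInter fun _ ↦ .iInter fun hi ↦
    measurable_sum_range_iSup_comap hi measurableSet_Iio)
    (measurable_sum_range_iSup_comap le_rfl measurableSet_Ici)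

variable [MeasurableSpace Ω] {μ : Measure Ω}

lemma ae_tendsto_sum_range_atBot {Y : ℕ → Ω → ℝ} (hint : Integrable (Y 0) μ)
    (hindep : Pairwise fun i j ↦ IndepFun (Y i) (Y j) μ)
    (hident : ∀ i, IdentDistrib (Y i) (Y 0) μ μ) (hmean : μ[Y 0] < 0) :
    ∀ᵐ ω ∂μ, Tendsto (fun n ↦ ∑ i ∈ range n, Y i ω) atTop atBot := by
  filter_upwards [strong_law_ae_real Y hint hindep hident] with ω hω
  refine (tendsto_natCast_atTop_atTop.atTop_mul_neg hmean hω).congr' ?_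
  filter_upwards [eventually_ne_atTop 0] with n hn
  field_simp

lemma measure_preimage_firstRecordAt_inter (hmeas : ∀ n, Measurable (X n))
    (hindep : iIndepFun X μ) (hident : ∀ n, IdentDistrib (X n) (X 0) μ μ) (k N : ℕ) :
    μ ((fun ω n ↦ X n ω) ⁻¹' (firstRecordAt N ∩ {x | x N = k})) =
      μ ((fun ω n ↦ X n ω) ⁻¹' (negativeUpTo N ∩ {x | -(k : ℤ) ≤ ∑ l ∈ range N, x l})) *
        μ {ω | X 0 ω = k} := by
  have hlast : (fun ω n ↦ X n ω) ⁻¹' {x | x N = k} = X N ⁻¹' {(k : ℤ)} := rfl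
  have hfirst : {ω | X 0 ω = k} = X 0 ⁻¹' {(k : ℤ)} := rfl
  have hindep_last := measure_inter_preimage_eq_mul_of_measurableSet_iSup (μ := μ)
    (s := Set.Iio N) hmeas hindep (lt_irrefl N)
    (measurableSet_preimage_negativeUpTo_inter_iSup_comap k N) (measurableSet_singleton (k : ℤ))
  rw [firstRecordAt_inter_eq, Set.preimage_inter, hlast, hfirst, hindep_last,
    (hident N).measure_mem_eq (measurableSet_singleton _)]

lemma measure_negativeUpTo_inter_eq_hitsFirstAt (hmeas : ∀ n, Measurable (X n))
    (hindep : iIndepFun X μ) (hident : ∀ n, IdentDistrib (X n) (X 0) μ μ) (j N : ℕ) :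
    μ ((fun ω n ↦ X n ω) ⁻¹' (negativeUpTo N ∩ {x | ∑ l ∈ range N, x l = -j})) =
      μ ((fun ω n ↦ X n ω) ⁻¹' hitsFirstAt j N) := by
  have hrev := identDistrib_comp_of_injective hmeas hindep hident (reflectBelow_injective N)
    injective_id
  refine (hrev.measure_mem_eq ((measurableSet_negativeUpTo N).inter ?_)).symm.trans ?_
  · exact measurable_sum_range N (measurableSet_singleton _)
  · exact congr_arg μ (Set.ext fun ω ↦ comp_reflectBelow_mem_iff (fun n ↦ X n ω) j N)

lemma ae_exists_mem_hitsFirstAt (hindep : iIndepFun X μ)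
    (hident : ∀ n, IdentDistrib (X n) (X 0) μ μ) (hskip : ∀ᵐ ω ∂μ, -1 ≤ X 0 ω)
    (hint : Integrable (fun ω ↦ (X 0 ω : ℝ)) μ) (hmean : ∫ ω, (X 0 ω : ℝ) ∂μ < 0) (j : ℕ) :
    ∀ᵐ ω ∂μ, ∃ N, (fun n ↦ X n ω) ∈ hitsFirstAt j N := by
  have hskip_all : ∀ᵐ ω ∂μ, ∀ n, -1 ≤ X n ω :=
    ae_all_iff.2 fun n ↦ (hident n).symm.ae_mem_snd (t := Set.Ici (-1)) measurableSet_Ici hskip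
  have hcast : Measurable fun z : ℤ ↦ (z : ℝ) := measurable_of_countable _
  have htendsto := ae_tendsto_sum_range_atBot (Y := fun n ω ↦ (X n ω : ℝ)) hint
    (fun i j hij ↦ (hindep.indepFun hij).comp hcast hcast) (fun i ↦ (hident i).comp hcast) hmean
  filter_upwards [hskip_all, htendsto] with ω hskip_ω htendsto_ω
  refine exists_mem_hitsFirstAt hskip_ω ?_
  obtain ⟨n, hn⟩ := (htendsto_ω.eventually_le_atBot (-(j : ℝ))).exists
  exact ⟨n, by exact_mod_cast hn⟩

variable [IsProbabilityMeasure μ]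

lemma tsum_measure_hitsFirstAt (hmeas : ∀ n, Measurable (X n)) (hindep : iIndepFun X μ)
    (hident : ∀ n, IdentDistrib (X n) (X 0) μ μ) (hskip : ∀ᵐ ω ∂μ, -1 ≤ X 0 ω)
    (hint : Integrable (fun ω ↦ (X 0 ω : ℝ)) μ) (hmean : ∫ ω, (X 0 ω : ℝ) ∂μ < 0) (j : ℕ) :
    ∑' N, μ ((fun ω n ↦ X n ω) ⁻¹' hitsFirstAt j N) = 1 := by
  have hhit : ∀ N, MeasurableSet ((fun ω n ↦ X n ω) ⁻¹' hitsFirstAt j N) :=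
    fun N ↦ measurable_pi_lambda _ hmeas (measurableSet_hitsFirstAt j N)
  rw [← measure_iUnion (fun a b hab ↦ (pairwise_disjoint_hitsFirstAt j hab).preimage _) hhit,
    ← measure_univ (μ := μ)]
  refine (ae_iff_measure_eq (MeasurableSet.iUnion hhit).nullMeasurableSet).1 ?_
  filter_upwards [ae_exists_mem_hitsFirstAt hindep hident hskip hint hmean j] with ω hω
    using Set.mem_iUnion.2 hω

lemma tsum_measure_negativeUpTo_inter_le (hmeas : ∀ n, Measurable (X n))
    (hindep : iIndepFun X μ)
    (hident : ∀ n, IdentDistrib (X n) (X 0) μ μ) (hskip : ∀ᵐ ω ∂μ, -1 ≤ X 0 ω)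
    (hint : Integrable (fun ω ↦ (X 0 ω : ℝ)) μ) (hmean : ∫ ω, (X 0 ω : ℝ) ∂μ < 0) (k : ℕ) :
    ∑' N, μ ((fun ω n ↦ X n ω) ⁻¹' (negativeUpTo N ∩ {x | -(k : ℤ) ≤ ∑ l ∈ range N, x l})) =
      k + 1 := by
  have hsplit : ∀ N, μ ((fun ω n ↦ X n ω) ⁻¹'
      (negativeUpTo N ∩ {x | -(k : ℤ) ≤ ∑ l ∈ range N, x l})) =
      ∑ j ∈ range (k + 1), μ ((fun ω n ↦ X n ω) ⁻¹' hitsFirstAt j N) := by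
    intro N
    rw [negativeUpTo_inter_eq_biUnion, Set.preimage_iUnion₂, measure_biUnion_finset]
    · exact sum_congr rfl fun j _ ↦
        measure_negativeUpTo_inter_eq_hitsFirstAt hmeas hindep hident j N
    · intro a _ b _ hab
      refine Set.disjoint_left.2 fun ω ha hb ↦ hab ?_
      have : -(a : ℤ) = -b := ha.2.symm.trans hb.2
      omega
    · exact fun j _ ↦ measurable_pi_lambda _ hmeas ((measurableSet_negativeUpTo N).inter
        (measurable_sum_range N (measurableSet_singleton _)))
  simp_rw [hsplit]
  rw [Summable.tsum_finsetSum fun _ _ ↦ ENNReal.summable]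
  simp [tsum_measure_hitsFirstAt hmeas hindep hident hskip hint hmean]

end RandomWalk

/-- For a skip-free to the left random walk with integrable increments of negative mean,
the last increment at the weak upper record epoch `τ = inf {n > 0 : S_n ≥ 0}` satisfies
`ℙ[τ < ∞, X_{τ-1} = k] = (k+1) ℙ[X_0 = k]` for every integer `k ≥ 0`.  The event
`{τ < ∞, X_{τ-1} = k}` is written as: there is `n ≥ 1` with `S_m < 0` for all `0 < m < n`,
`S_n ≥ 0` and `X_{n-1} = k`. -/
theorem record_increment_size_biased {Ω : Type*} [MeasurableSpace Ω] (μ : Measure Ω)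
    [IsProbabilityMeasure μ] (X : ℕ → Ω → ℤ)
    (hmeas : ∀ n, Measurable (X n))
    (hindep : iIndepFun X μ)
    (hident : ∀ n, IdentDistrib (X n) (X 0) μ μ)
    (hskip : ∀ᵐ ω ∂μ, -1 ≤ X 0 ω)
    (hint : Integrable (fun ω => (X 0 ω : ℝ)) μ)
    (hmean : ∫ ω, (X 0 ω : ℝ) ∂μ < 0)
    (k : ℕ) :
    μ {ω | ∃ n : ℕ, 0 < n ∧
        (∀ m : ℕ, 0 < m → m < n → ∑ l ∈ Finset.range m, X l ω < 0) ∧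
        0 ≤ ∑ l ∈ Finset.range n, X l ω ∧ X (n - 1) ω = (k : ℤ)} =
      ((k : ℝ≥0∞) + 1) * μ {ω | X 0 ω = (k : ℤ)} := by
  set record : ℕ → Set Ω := fun N ↦ (fun ω n ↦ X n ω) ⁻¹' (firstRecordAt N ∩ {x | x N = k})
  have hdisj : Pairwise (Disjoint on record) := fun a b hab ↦
    ((pairwise_disjoint_firstRecordAt hab).mono Set.inter_subset_left
      Set.inter_subset_left).preimage _
  have hrecord : ∀ N, MeasurableSet (record N) := fun N ↦ measurable_pi_lambda _ hmeas
    ((measurableSet_firstRecordAt N).inter (measurable_pi_apply N (measurableSet_singleton _)))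
  calc _ = μ (⋃ N, record N) := by
        congr 1
        ext ω
        simpa [record] using exists_firstRecordAt_iff (fun n ↦ X n ω) k
    _ = ∑' N, μ (record N) := measure_iUnion hdisj hrecord
    _ = _ := by
      simp_rw [record, measure_preimage_firstRecordAt_inter hmeas hindep hident]
      rw [ENNReal.tsum_mul_right,
        tsum_measure_negativeUpTo_inter_le hmeas hindep hident hskip hint hmean]
end

section
/- Let (Ω, F, μ) be a probability space, T : Ω → Ω an invertible ergodic measure-preserving transformation, and f : Ω → ℤ integrable with ∫ f dμ = 0; set X_n = f ∘ T^n for n ∈ ℤ. Then for μ-almost every ω, the record graph of (X_n(ω))_{n∈ℤ} is connected, and every integer has infinitely many ancestors (i.e., for every i ∈ ℤ and every n ≥ 0, R^n(i) < R^{n+1}(i)), where R is the record map of (X_n(ω)). -/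
open MeasureTheory

/-- The `n`-th iterate (`n : ℤ`) of an invertible transformation `T`. -/
def zIter {Ω : Type*} [MeasurableSpace Ω] (T : Ω ≃ᵐ Ω) (n : ℤ) (ω : Ω) : Ω :=
  if 0 ≤ n then (⇑T)^[n.toNat] ω else (⇑T.symm)^[(-n).toNat] ω

/-- The stationary sequence `X_n(ω) = f (T^n ω)`, `n : ℤ`, realized at `ω`. -/
def statSeq {Ω : Type*} [MeasurableSpace Ω] (T : Ω ≃ᵐ Ω) (f : Ω → ℤ) (ω : Ω) : ℤ → ℤ :=
  fun n => f (zIter T n ω)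

/-!
If every index `i` has a record, i.e. some `n > i` with `X_i + ⋯ + X_{n-1} ≥ 0`, then `R i > i`,
and for `a ≤ j < R a` the sum over `[a, j)` is negative, forcing `R j ≤ R a`. Hence every orbit
started in `[a, R a)` passes through `R a`, which merges any two orbits.

By stationarity it remains to show that the set `A` of `ω` with `S_n f ω < 0` for all `n ≥ 1` is
null. Otherwise `g = f + 1_A` has mean `μ A > 0`, while on `A` the Birkhoff sums of `g` stay `≤ 0`:
an intermediate visit to `A` splits such a sum into two shorter ones, and without one the single
visit is paid for by `S_n f ω ≤ -1`. By ergodicity the Birkhoff sums of `g` are then bounded above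
almost everywhere, so those of `c - g` with `0 < c < ∫ g` become positive almost everywhere, and
Garsia's maximal inequality gives `∫ (c - g) ≥ 0`, a contradiction.
-/

open Filter Finset Function

section IterateMerge

variable {R : ℤ → ℤ}

theorem exists_iterate_eq_of_le_of_lt (hlt : ∀ i, i < R i)
    (hnest : ∀ a j, a ≤ j → j < R a → R j ≤ R a) {a j : ℤ} (haj : a ≤ j) (hj : j < R a) :
    ∃ n, R^[n] j = R a := by
  induction hk : (R a - j).toNat using Nat.strong_induction_on generalizing j with
  | _ k ih =>
    rcases (hnest a j haj hj).lt_or_eq with hRj | hRj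
    · obtain ⟨n, hn⟩ := ih _ (by have := hlt j; omega) (haj.trans (hlt j).le) hRj rfl
      exact ⟨n + 1, by rwa [iterate_succ_apply]⟩
    · exact ⟨1, hRj⟩

theorem exists_iterate_eq_iterate_of_le (hlt : ∀ i, i < R i)
    (hnest : ∀ a j, a ≤ j → j < R a → R j ≤ R a) {i j : ℤ} (hij : i ≤ j) :
    ∃ m n : ℕ, R^[m] i = R^[n] j := by
  induction hk : (j - i).toNat using Nat.strong_induction_on generalizing i with
  | _ k ih =>
    rcases lt_or_ge j (R i) with hj | hj
    · obtain ⟨n, hn⟩ := exists_iterate_eq_of_le_of_lt hlt hnest hij hj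
      exact ⟨1, n, hn.symm⟩
    · obtain ⟨m, n, h⟩ := ih _ (by have := hlt i; omega) hj rfl
      exact ⟨m + 1, n, by rwa [iterate_succ_apply]⟩

theorem exists_iterate_eq_iterate (hlt : ∀ i, i < R i)
    (hnest : ∀ a j, a ≤ j → j < R a → R j ≤ R a) (i j : ℤ) :
    ∃ m n : ℕ, R^[m] i = R^[n] j := by
  rcases le_total i j with hij | hji
  · exact exists_iterate_eq_iterate_of_le hlt hnest hij
  · obtain ⟨m, n, h⟩ := exists_iterate_eq_iterate_of_le hlt hnest hji
    exact ⟨n, m, h.symm⟩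

end IterateMerge

section RecordMap

def HasRecords (x : ℤ → ℤ) : Prop :=
  ∀ i, ∃ n, i < n ∧ 0 ≤ ∑ l ∈ Ico i n, x l

variable {x : ℤ → ℤ}

theorem recordMap_spec (hx : HasRecords x) (i : ℤ) :
    i < recordMap x i ∧ 0 ≤ ∑ l ∈ Ico i (recordMap x i), x l := by
  rw [recordMap, if_pos (hx i)]
  exact Int.csInf_mem (hx i) ⟨i, fun n hn => hn.1.le⟩

theorem lt_recordMap (hx : HasRecords x) (i : ℤ) : i < recordMap x i :=
  (recordMap_spec hx i).1

theorem recordMap_le (hx : HasRecords x) {i n : ℤ} (hin : i < n)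
    (hsum : 0 ≤ ∑ l ∈ Ico i n, x l) : recordMap x i ≤ n := by
  rw [recordMap, if_pos (hx i)]
  exact csInf_le ⟨i, fun n hn => hn.1.le⟩ ⟨hin, hsum⟩

theorem recordMap_le_recordMap (hx : HasRecords x) {a j : ℤ} (haj : a ≤ j)
    (hj : j < recordMap x a) : recordMap x j ≤ recordMap x a := by
  rcases haj.eq_or_lt with rfl | haj
  · rfl
  have hneg : ∑ l ∈ Ico a j, x l < 0 :=
    not_le.1 fun h => (recordMap_le hx haj h).not_gt hj
  have hsplit : ∑ l ∈ Ico a j, x l + ∑ l ∈ Ico j (recordMap x a), x l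
      = ∑ l ∈ Ico a (recordMap x a), x l := by
    rw [← sum_union (Ico_disjoint_Ico_consecutive _ _ _), Ico_union_Ico_eq_Ico haj.le hj.le]
  exact recordMap_le hx hj (by linarith [(recordMap_spec hx a).2])

theorem HasRecords.exists_recordMap_iterate_eq (hx : HasRecords x) (i j : ℤ) :
    ∃ m n : ℕ, (recordMap x)^[m] i = (recordMap x)^[n] j :=
  exists_iterate_eq_iterate (lt_recordMap hx)
    (fun _ _ => recordMap_le_recordMap hx) i j

theorem HasRecords.recordMap_iterate_lt_succ (hx : HasRecords x) (i : ℤ) (n : ℕ) :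
    (recordMap x)^[n] i < (recordMap x)^[n + 1] i := by
  rw [iterate_succ_apply']
  exact lt_recordMap hx _

end RecordMap

section MaximalErgodic

variable {α : Type*} {T : α → α} {h : α → ℝ}

/-- `birkhoffMax T h N x = max_{n ≤ N} birkhoffSum T h n x`. -/
noncomputable def birkhoffMax (T : α → α) (h : α → ℝ) : ℕ → α → ℝ
  | 0 => 0
  | N + 1 => fun x => max (h x + birkhoffMax T h N (T x)) 0

theorem birkhoffMax_nonneg (N : ℕ) (x : α) : 0 ≤ birkhoffMax T h N x := by
  cases N with
  | zero => rfl
  | succ N => exact le_max_right _ _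

theorem birkhoffMax_le_succ (N : ℕ) (x : α) :
    birkhoffMax T h N x ≤ birkhoffMax T h (N + 1) x := by
  induction N generalizing x with
  | zero => exact birkhoffMax_nonneg 1 x
  | succ N ih => exact max_le_max (by linarith [ih (T x)]) le_rfl

theorem birkhoffSum_le_birkhoffMax {n N : ℕ} (hnN : n ≤ N) (x : α) :
    birkhoffSum T h n x ≤ birkhoffMax T h N x := by
  induction N generalizing n x with
  | zero => simp [Nat.le_zero.1 hnN, birkhoffMax]
  | succ N ih =>
    cases n with
    | zero => simpa [birkhoffSum] using birkhoffMax_nonneg (N + 1) x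
    | succ n =>
      rw [birkhoffSum_succ']
      exact (add_le_add le_rfl (ih (n := n) (by omega) (T x))).trans (le_max_left _ _)

theorem birkhoffMax_sub_comp_le_indicator (N : ℕ) (x : α) :
    birkhoffMax T h (N + 1) x - birkhoffMax T h (N + 1) (T x) ≤
      {y | 0 < birkhoffMax T h (N + 1) y}.indicator h x := by
  have hcomp := birkhoffMax_le_succ (T := T) (h := h) N (T x)
  by_cases hpos : 0 < birkhoffMax T h (N + 1) x
  · rw [Set.indicator_of_mem (s := {y | 0 < birkhoffMax T h (N + 1) y}) hpos]
    have hmax : birkhoffMax T h (N + 1) x = h x + birkhoffMax T h N (T x) :=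
      max_eq_left ((lt_max_iff.1 hpos).resolve_right (lt_irrefl 0)).le
    linarith
  · rw [Set.indicator_of_notMem (s := {y | 0 < birkhoffMax T h (N + 1) y}) hpos]
    have hzero : birkhoffMax T h (N + 1) x = 0 :=
      le_antisymm (not_lt.1 hpos) (birkhoffMax_nonneg _ _)
    linarith [birkhoffMax_nonneg (T := T) (h := h) (N + 1) (T x)]

variable [MeasurableSpace α] {μ : Measure α}

theorem measurable_birkhoffSum {M : Type*} [AddCommMonoid M] [MeasurableSpace M]
    [MeasurableAdd₂ M] {g : α → M} (hT : Measurable T) (hg : Measurable g) (n : ℕ) :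
    Measurable (birkhoffSum T g n) :=
  Finset.measurable_sum _ fun k _ => hg.comp (hT.iterate k)

theorem measurable_birkhoffMax (hT : Measurable T) (hh : Measurable h) (N : ℕ) :
    Measurable (birkhoffMax T h N) := by
  induction N with
  | zero => exact measurable_const
  | succ N ih => exact (hh.add (ih.comp hT)).max measurable_const

theorem integrable_birkhoffMax (hT : MeasurePreserving T μ μ) (hh : Integrable h μ) (N : ℕ) :
    Integrable (birkhoffMax T h N) μ := by
  induction N with
  | zero => exact integrable_zero _ _ μ
  | succ N ih => exact (hh.add ((hT.integrable_comp ih.aestronglyMeasurable).2 ih)).pos_part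

theorem setIntegral_birkhoffMax_pos_nonneg (hT : MeasurePreserving T μ μ) (hm : Measurable h)
    (hh : Integrable h μ) (N : ℕ) :
    0 ≤ ∫ x in {x | 0 < birkhoffMax T h (N + 1) x}, h x ∂μ := by
  set M := birkhoffMax T h (N + 1)
  have hM : Integrable M μ := integrable_birkhoffMax hT hh _
  have hMT : Integrable (fun x => M (T x)) μ :=
    (hT.integrable_comp hM.aestronglyMeasurable).2 hM
  have hE : MeasurableSet {x | 0 < M x} :=
    measurableSet_lt measurable_const (measurable_birkhoffMax hT.measurable hm _)
  have hcomp : ∫ x, M (T x) ∂μ = ∫ x, M x ∂μ := by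
    rw [← integral_map hT.aemeasurable (by rw [hT.map_eq]; exact hM.aestronglyMeasurable),
      hT.map_eq]
  calc (0 : ℝ) = ∫ x, (M x - M (T x)) ∂μ := by rw [integral_sub hM hMT]; simp [hcomp]
    _ ≤ ∫ x, {x | 0 < M x}.indicator h x ∂μ :=
      integral_mono (hM.sub hMT) (hh.indicator hE) (birkhoffMax_sub_comp_le_indicator N)
    _ = _ := integral_indicator hE

theorem integral_nonneg_of_ae_exists_birkhoffSum_pos (hT : MeasurePreserving T μ μ)
    (hm : Measurable h) (hh : Integrable h μ) (hpos : ∀ᵐ x ∂μ, ∃ n, 0 < birkhoffSum T h n x) :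
    0 ≤ ∫ x, h x ∂μ := by
  set E : ℕ → Set α := fun N => {x | 0 < birkhoffMax T h (N + 1) x}
  have hE : ∀ N, MeasurableSet (E N) := fun N =>
    measurableSet_lt measurable_const (measurable_birkhoffMax hT.measurable hm _)
  have hmono : Monotone E := monotone_nat_of_le_succ fun N x hx =>
    hx.trans_le (birkhoffMax_le_succ _ x)
  have hunion : (⋃ N, E N) =ᵐ[μ] (Set.univ : Set α) := by
    refine ae_eq_univ.2 (measure_mono_null (fun x hx => ?_) (ae_iff.1 hpos))
    rintro ⟨n, hn⟩
    exact hx (Set.mem_iUnion.2 ⟨n, hn.trans_le (birkhoffSum_le_birkhoffMax (by omega) x)⟩)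
  have hlim := tendsto_setIntegral_of_monotone hE hmono hh.integrableOn
  rw [setIntegral_congr_set hunion, setIntegral_univ] at hlim
  exact ge_of_tendsto hlim (Eventually.of_forall fun N =>
    setIntegral_birkhoffMax_pos_nonneg hT hm hh N)

end MaximalErgodic

section Ergodic

variable {α : Type*} {T : α → α}

theorem preimage_setOf_bddAbove_birkhoffSum (h : α → ℝ) :
    T ⁻¹' {x | BddAbove (Set.range fun n => birkhoffSum T h n x)} =
      {x | BddAbove (Set.range fun n => birkhoffSum T h n x)} := by
  ext x
  simp only [Set.mem_preimage, Set.mem_ofPred_eq, bddAbove_def, Set.forall_mem_range]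
  constructor
  · rintro ⟨B, hB⟩
    refine ⟨max 0 (h x + B), fun n => ?_⟩
    cases n with
    | zero => simp
    | succ n =>
      rw [birkhoffSum_succ']
      exact (add_le_add le_rfl (hB n)).trans (le_max_right _ _)
  · rintro ⟨B, hB⟩
    refine ⟨B - h x, fun n => ?_⟩
    linarith [birkhoffSum_succ' T h n x, hB (n + 1)]

variable [MeasurableSpace α] {μ : Measure α} [IsProbabilityMeasure μ]

theorem integral_nonpos_of_measure_bddAbove_birkhoffSum_ne_zero {h : α → ℝ} (hT : Ergodic T μ)
    (hm : Measurable h) (hh : Integrable h μ)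
    (hbdd : μ {x | BddAbove (Set.range fun n => birkhoffSum T h n x)} ≠ 0) :
    ∫ x, h x ∂μ ≤ 0 := by
  have hD : ∀ᵐ x ∂μ, BddAbove (Set.range fun n => birkhoffSum T h n x) :=
    (hT.ae_mem_or_ae_notMem
      (measurableSet_bddAbove_range (measurable_birkhoffSum hT.measurable hm))
      (preimage_setOf_bddAbove_birkhoffSum h)).resolve_right
      fun h0 => hbdd (measure_eq_zero_iff_ae_notMem.2 h0)
  by_contra! hpos
  set c := (∫ x, h x ∂μ) / 2 with hc_def
  have hc : 0 < c := half_pos hpos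
  have hdrift : ∀ᵐ x ∂μ, ∃ n, 0 < birkhoffSum T (fun y => c - h y) n x := by
    filter_upwards [hD] with x ⟨B, hB⟩
    obtain ⟨n, hn⟩ := exists_nat_gt (B / c)
    have hsum : birkhoffSum T (fun y => c - h y) n x = n * c - birkhoffSum T h n x := by
      simp [birkhoffSum, sum_sub_distrib]
    refine ⟨n, ?_⟩
    rw [hsum]
    linarith [hB ⟨n, rfl⟩, (div_lt_iff₀ hc).1 hn]
  have hnonneg : 0 ≤ ∫ x, (c - h x) ∂μ := integral_nonneg_of_ae_exists_birkhoffSum_pos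
    hT.toMeasurePreserving (measurable_const.sub hm) ((integrable_const c).sub hh) hdrift
  rw [integral_sub (integrable_const c) hh, integral_const] at hnonneg
  simp only [probReal_univ, one_smul] at hnonneg
  linarith [hc_def]

end Ergodic

section IntegerValued

variable {α : Type*} {T : α → α} {f : α → ℤ}

theorem birkhoffSum_add_indicator_nonpos {A : Set α}
    (hA : ∀ x ∈ A, ∀ n, 0 < n → birkhoffSum T f n x < 0) (n : ℕ) :
    ∀ x ∈ A, birkhoffSum T (f + A.indicator 1) n x ≤ 0 := by
  induction n using Nat.strong_induction_on with
  | _ n ih =>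
    intro x hx
    by_cases hvisit : ∃ k, 0 < k ∧ k < n ∧ T^[k] x ∈ A
    · obtain ⟨k, hk0, hkn, hkA⟩ := hvisit
      rw [← Nat.add_sub_cancel' hkn.le, birkhoffSum_add]
      linarith [ih k hkn x hx, ih (n - k) (by omega) _ hkA]
    · push Not at hvisit
      rcases n.eq_zero_or_pos with rfl | hn
      · simp
      have hcount : birkhoffSum T (A.indicator (1 : α → ℤ)) n x = 1 := by
        rw [birkhoffSum, sum_eq_single 0]
        · simp [hx]
        · intro k hk hk0
          exact Set.indicator_of_notMem (hvisit k (Nat.pos_of_ne_zero hk0) (mem_range.1 hk)) _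
        · simp [hn]
      rw [birkhoffSum_add', hcount]
      linarith [hA x hx n hn]

variable [MeasurableSpace α] {μ : Measure α} [IsProbabilityMeasure μ]

theorem measure_setOf_birkhoffSum_neg_eq_zero (hT : Ergodic T μ) (hf : Measurable f)
    (hint : Integrable (fun x => (f x : ℝ)) μ) (hmean : ∫ x, (f x : ℝ) ∂μ = 0) :
    μ {x | ∀ n, 0 < n → birkhoffSum T f n x < 0} = 0 := by
  set A := {x | ∀ n, 0 < n → birkhoffSum T f n x < 0}
  have hAm : MeasurableSet A := by
    simp only [A, Set.ofPred_forall]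
    exact .iInter fun n => .iInter fun _ =>
      measurableSet_lt (measurable_birkhoffSum hT.measurable hf n) measurable_const
  set g : α → ℝ := fun x => (f x : ℝ) + A.indicator (1 : α → ℝ) x with hg_def
  have hAi : Integrable (A.indicator (1 : α → ℝ)) μ := (integrable_const 1).indicator hAm
  have hgi : Integrable g μ := hint.add hAi
  have hgm : Measurable g := (measurable_from_top.comp hf).add (measurable_const.indicator hAm)
  have hg : ∫ x, g x ∂μ = μ.real A := by
    rw [hg_def, integral_add hint hAi, hmean, zero_add, integral_indicator_one hAm]
  have hAD : A ⊆ {x | BddAbove (Set.range fun n => birkhoffSum T g n x)} := by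
    intro x hx
    refine ⟨0, ?_⟩
    rintro - ⟨n, rfl⟩
    have hcast : birkhoffSum T g n x = (birkhoffSum T (f + A.indicator 1) n x : ℤ) := by
      simp only [birkhoffSum, Int.cast_sum]
      refine sum_congr rfl fun k _ => ?_
      by_cases hk : T^[k] x ∈ A <;> simp [g, hk]
    show birkhoffSum T g n x ≤ 0
    rw [hcast]
    exact_mod_cast birkhoffSum_add_indicator_nonpos (fun x hx => hx) n x hx
  by_contra hA
  have hle := integral_nonpos_of_measure_bddAbove_birkhoffSum_ne_zero hT hgm hgi fun h0 =>
    hA (measure_mono_null hAD h0)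
  rw [hg] at hle
  exact hA ((measureReal_eq_zero_iff).1 (le_antisymm hle measureReal_nonneg))

end IntegerValued

section StationarySequence

variable {Ω : Type*} [MeasurableSpace Ω] (T : Ω ≃ᵐ Ω)

theorem zIter_succ (k : ℤ) (ω : Ω) : zIter T (k + 1) ω = T (zIter T k ω) := by
  rcases le_or_gt 0 k with hk | hk
  · rw [zIter, zIter, if_pos hk, if_pos (by omega), show (k + 1).toNat = k.toNat + 1 by omega,
      iterate_succ_apply']
  rcases (show k + 1 ≤ 0 by omega).eq_or_lt with hk1 | hk1
  · obtain rfl : k = -1 := by omega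
    simp [zIter]
  · rw [zIter, zIter, if_neg (by omega), if_neg (by omega),
      show (-k).toNat = (-(k + 1)).toNat + 1 by omega, iterate_succ_apply',
      MeasurableEquiv.apply_symm_apply]

theorem zIter_add_natCast (i : ℤ) (m : ℕ) (ω : Ω) :
    zIter T (i + m) ω = T^[m] (zIter T i ω) := by
  induction m with
  | zero => simp
  | succ m ih => rw [Nat.cast_succ, ← add_assoc, zIter_succ, ih, iterate_succ_apply']

theorem measurePreserving_zIter {μ : Measure Ω} (hT : MeasurePreserving T μ μ) (n : ℤ) :
    MeasurePreserving (zIter T n) μ μ := by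
  by_cases hn : 0 ≤ n
  · convert hT.iterate n.toNat using 1
    exact funext fun ω => if_pos hn
  · convert hT.symm.iterate (-n).toNat using 1
    exact funext fun ω => if_neg hn

theorem sum_Ico_statSeq (f : Ω → ℤ) (i : ℤ) (m : ℕ) (ω : Ω) :
    ∑ l ∈ Ico i (i + m), statSeq T f ω l = birkhoffSum T f m (zIter T i ω) := by
  rw [Int.Ico_eq_finset_map, sum_map, add_sub_cancel_left, Int.toNat_natCast]
  exact sum_congr rfl fun k _ => congrArg f (zIter_add_natCast T i k ω)

theorem ae_hasRecords_statSeq {μ : Measure Ω} [IsProbabilityMeasure μ] (hT : Ergodic T μ)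
    {f : Ω → ℤ} (hf : Measurable f) (hint : Integrable (fun ω => (f ω : ℝ)) μ)
    (hmean : ∫ ω, (f ω : ℝ) ∂μ = 0) :
    ∀ᵐ ω ∂μ, HasRecords (statSeq T f ω) := by
  set A := {ω | ∀ n, 0 < n → birkhoffSum T f n ω < 0}
  have hA : μ A = 0 := measure_setOf_birkhoffSum_neg_eq_zero hT hf hint hmean
  refine ae_all_iff.2 fun i => ae_iff.2 <| measure_mono_null ?_
    ((measurePreserving_zIter T hT.toMeasurePreserving i).preimage_null hA)
  intro ω hω m hm
  rw [← sum_Ico_statSeq]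
  exact not_le.1 fun h => hω ⟨i + m, by omega, h⟩

end StationarySequence

/-- Zero mean case of the phase transition: for a stationary ergodic integer-valued
sequence `X_n = f ∘ T^n` with `f` integrable of zero mean, almost surely the record graph
of `(X_n(ω))` is connected and every integer has infinitely many ancestors. -/
theorem record_graph_of_zero_mean {Ω : Type*} [MeasurableSpace Ω]
    (μ : Measure Ω) [IsProbabilityMeasure μ] (T : Ω ≃ᵐ Ω)
    (hT : Ergodic (⇑T) μ) (f : Ω → ℤ) (hf : Measurable f)
    (hint : Integrable (fun ω => (f ω : ℝ)) μ)
    (hmean : ∫ ω, (f ω : ℝ) ∂μ = 0) :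
    ∀ᵐ ω ∂μ,
      (∀ i j : ℤ, ∃ m n : ℕ,
        (recordMap (statSeq T f ω))^[m] i = (recordMap (statSeq T f ω))^[n] j) ∧
      (∀ i : ℤ, ∀ n : ℕ,
        (recordMap (statSeq T f ω))^[n] i < (recordMap (statSeq T f ω))^[n + 1] i) := by
  filter_upwards [ae_hasRecords_statSeq T hT hf hint hmean] with ω hω
  exact ⟨hω.exists_recordMap_iterate_eq, hω.recordMap_iterate_lt_succ⟩
end
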